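/- arXiv:2601.15058 — 7 statements merged into one kernel-verified Lean document; each statement's English description precedes it below -/
import Mathlib

section
/- Let r ∈ ℤ and k ≥ 2 be an integer with r and k coprime. Let V : ℝ → ℝ be a C¹ function with V(x + 1) = V(x) and V(x + r/k) = V(x) for all x ∈ ℝ. Suppose there exists a continuous function f : ℝ → ℝ with f(x + 1) = f(x) for all x, whose graph is invariant under the standard map F_V (i.e. f(x + f(x) + V'(x)) = f(x) + V'(x) for all x), and which consists of k-periodic points of rotation number r/k: F_V^{∘k}(x, f(x)) = (x + r, f(x)) for all x ∈ ℝ. Then V is constant. -/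
open Real

/-- The standard map `F_V(x,y) = (x + y + V'(x), y + V'(x))`, given `V' : ℝ → ℝ`. -/
noncomputable def StdMap (V' : ℝ → ℝ) : ℝ × ℝ → ℝ × ℝ :=
  fun p => (p.1 + p.2 + V' p.1, p.2 + V' p.1)

/-- Theorem 1.7: if the potential `V` is `r/k`-periodic with `gcd(r,k) = 1`, `k ≥ 2`, and
the standard map `F_V` has an invariant curve of `k`-periodic orbits of rotation number
`r/k`, then `V` is constant. -/
theorem no_higher_order_periodic_integrability
    (r : ℤ) (k : ℕ) (hk : 2 ≤ k) (hcop : Int.gcd r (k : ℤ) = 1)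
    (V : ℝ → ℝ) (hV : ContDiff ℝ 1 V)
    (hper1 : ∀ x, V (x + 1) = V x)
    (hperk : ∀ x, V (x + (r : ℝ) / (k : ℝ)) = V x)
    (f : ℝ → ℝ) (hf : Continuous f)
    (hfper : ∀ x, f (x + 1) = f x)
    (hinv : ∀ x, f (x + f x + deriv V x) = f x + deriv V x)
    (horbit : ∀ x, (StdMap (deriv V))^[k] (x, f x) = (x + (r : ℝ), f x)) :
    ∀ x y : ℝ, V x = V y := by
  have hkR : (0:ℝ) < (k:ℝ) := by
    have : 0 < k := by omega
    exact_mod_cast this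
  set c : ℝ := 1 / (k:ℝ) with hcdef
  have hcpos : 0 < c := by rw [hcdef]; positivity
  have hkc : (k:ℝ) * c = 1 := by rw [hcdef]; field_simp
  have hVdiff : Differentiable ℝ V := hV.differentiable one_ne_zero
  have hV'cont : Continuous (deriv V) := hV.continuous_deriv le_rfl
  -- V has period c = 1/k
  have hVc : ∀ x, V (x + c) = V x := by
    obtain ⟨a, b, hab⟩ : ∃ a b : ℤ, a * r + b * (k:ℤ) = 1 := by
      obtain ⟨a, b, h⟩ := Int.isCoprime_iff_gcd_eq_one.mpr hcop
      exact ⟨a, b, h⟩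
    have p1 : Function.Periodic V 1 := hper1
    have p2 : Function.Periodic V ((r:ℝ)/(k:ℝ)) := hperk
    have p3 : Function.Periodic V ((a:ℝ) * ((r:ℝ)/(k:ℝ)) + (b:ℝ) * 1) :=
      (p2.int_mul a).add_period (p1.int_mul b)
    have habR : (a:ℝ) * (r:ℝ) + (b:ℝ) * (k:ℝ) = 1 := by exact_mod_cast hab
    have heq : (a:ℝ) * ((r:ℝ)/(k:ℝ)) + (b:ℝ) * 1 = c := by
      rw [hcdef]; field_simp; linarith
    rw [heq] at p3
    exact p3
  have hV'c : ∀ x, deriv V (x + c) = deriv V x := by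
    intro x
    have hVeq : (fun y => V (y + c)) = V := funext hVc
    calc deriv V (x + c) = deriv (fun y => V (y + c)) x := (deriv_comp_add_const V c x).symm
      _ = deriv V x := by rw [hVeq]
  have hV'1 : ∀ x, deriv V (x + 1) = deriv V x := by
    intro x
    have hVeq : (fun y => V (y + 1)) = V := funext hper1
    calc deriv V (x + 1) = deriv (fun y => V (y + 1)) x := (deriv_comp_add_const V 1 x).symm
      _ = deriv V x := by rw [hVeq]
  -- the circle map g
  set g : ℝ → ℝ := fun x => x + f x + deriv V x with hgdef
  have hgx : ∀ x, g x = x + f x + deriv V x := fun x => rfl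
  have hfg : ∀ x, f (g x) = f x + deriv V x := hinv
  have hstep : ∀ y, StdMap (deriv V) (y, f y) = (g y, f (g y)) := by
    intro y
    show (y + f y + deriv V y, f y + deriv V y) = _
    rw [hgx, hfg]
  have horb : ∀ (n : ℕ) (y : ℝ),
      (StdMap (deriv V))^[n] (y, f y) = (g^[n] y, f (g^[n] y)) := by
    intro n
    induction n with
    | zero => intro y; simp
    | succ n ih =>
      intro y
      rw [Function.iterate_succ_apply', ih y, hstep, Function.iterate_succ_apply']
  have giter : ∀ x, g^[k] x = x + (r:ℝ) := by
    intro x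
    have h1 := horb k x
    rw [horbit x] at h1
    exact (Prod.ext_iff.mp h1.symm).1
  have gcont : Continuous g := by
    rw [hgdef]; exact (continuous_id.add hf).add hV'cont
  obtain ⟨m, hm⟩ : ∃ m, k = m + 1 := ⟨k - 1, by omega⟩
  have gkfun : g^[k] = fun x => x + (r:ℝ) := funext giter
  have ginj : Function.Injective g := by
    have hik : Function.Injective (g^[k]) := by
      rw [gkfun]; intro a b hab; simpa using hab
    rw [hm, Function.iterate_succ] at hik
    exact hik.of_comp
  have gsurj : Function.Surjective g := by
    have hsk : Function.Surjective (g^[k]) := by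
      rw [gkfun]; intro y; exact ⟨y - r, by ring⟩
    rw [hm, Function.iterate_succ'] at hsk
    exact hsk.of_comp
  have gper : ∀ x, g (x + 1) = g x + 1 := by
    intro x
    rw [hgx, hgx, hfper, hV'1]; ring
  have gmono : StrictMono g := by
    rcases gcont.strictMono_of_inj ginj with h | h
    · exact h
    · exfalso
      have h01 : g 1 < g 0 := h zero_lt_one
      have h2 := gper 0
      rw [zero_add] at h2
      linarith
  -- h displacement relation
  have hhg : ∀ y, (f (g y) + deriv V (g y)) = (f y + deriv V y) + deriv V (g y) := by
    intro y; rw [hfg]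
  -- main identity from the 1/k-periodicity of V'
  have main : ∀ x w, g w = g x + c → g (g x + c) - g (g x) = 2*c - (w - x) := by
    intro x w hw
    have e1 : deriv V (g w) = deriv V (g x) := by rw [hw]; exact hV'c (g x)
    -- h t := f t + deriv V t = g t - t
    have ht : ∀ t, f t + deriv V t = g t - t := fun t => by rw [hgx]; ring
    have e2 := hhg w
    have e3 := hhg x
    rw [ht (g w), ht w, e1] at e2
    rw [ht (g x), ht x] at e3
    rw [hw] at e2
    linarith
  have prop_gt : ∀ x, g x + c < g (x + c) → g (g x) + c < g (g x + c) := by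
    intro x hx
    obtain ⟨w, hw⟩ := gsurj (g x + c)
    have hmain := main x w hw
    have hwlt : w < x + c := by
      have : g w < g (x + c) := by rw [hw]; exact hx
      exact gmono.lt_iff_lt.mp this
    linarith
  have prop_lt : ∀ x, g (x + c) < g x + c → g (g x + c) < g (g x) + c := by
    intro x hx
    obtain ⟨w, hw⟩ := gsurj (g x + c)
    have hmain := main x w hw
    have hwgt : x + c < w := by
      have : g (x + c) < g w := by rw [hw]; exact hx
      exact gmono.lt_iff_lt.mp this
    linarith
  -- g commutes with translation by c
  have gc : ∀ x, g (x + c) = g x + c := by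
    intro x
    by_contra hne
    rcases lt_or_gt_of_ne hne with hlt | hgt
    · -- g (x+c) < g x + c
      have stepA : ∀ n, g (g^[n] x + c) < g (g^[n] x) + c := by
        intro n
        induction n with
        | zero => simpa using hlt
        | succ n ih =>
          rw [Function.iterate_succ_apply']
          exact prop_lt _ ih
      have sless : ∀ n, g^[n+1] (x + c) < g^[n+1] x + c := by
        intro n
        induction n with
        | zero => simpa using hlt
        | succ n ih =>
          have h1 : g (g^[n+1] (x+c)) < g (g^[n+1] x + c) := gmono ih
          have h2 := stepA (n+1)
          rw [Function.iterate_succ_apply' g (n+1) (x+c), Function.iterate_succ_apply' g (n+1) x]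
          linarith
      have hkk := sless (k-1)
      rw [show k - 1 + 1 = k from by omega, giter (x+c), giter x] at hkk
      linarith
    · -- g x + c < g (x+c)
      have stepA : ∀ n, g (g^[n] x) + c < g (g^[n] x + c) := by
        intro n
        induction n with
        | zero => simpa using hgt
        | succ n ih =>
          rw [Function.iterate_succ_apply']
          exact prop_gt _ ih
      have sgt : ∀ n, g^[n+1] x + c < g^[n+1] (x + c) := by
        intro n
        induction n with
        | zero => simpa using hgt
        | succ n ih =>
          have h1 : g (g^[n+1] x + c) < g (g^[n+1] (x+c)) := gmono ih
          have h2 := stepA (n+1)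
          rw [Function.iterate_succ_apply' g (n+1) (x+c), Function.iterate_succ_apply' g (n+1) x]
          linarith
      have hkk := sgt (k-1)
      rw [show k - 1 + 1 = k from by omega, giter (x+c), giter x] at hkk
      linarith
  -- g commutes with translation by n*c for any integer n
  have gnc : ∀ (n : ℕ) (x : ℝ), g (x + (n:ℝ) * c) = g x + (n:ℝ) * c := by
    intro n
    induction n with
    | zero => intro x; simp
    | succ n ih =>
      intro x
      push_cast
      rw [show x + ((n:ℝ)+1)*c = (x + (n:ℝ)*c) + c from by ring, gc, ih]
      ring
  have gmc : ∀ (n : ℕ) (x : ℝ), g (x - (n:ℝ) * c) = g x - (n:ℝ) * c := by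
    intro n x
    have h1 := gnc n (x - (n:ℝ)*c)
    rw [show x - (n:ℝ)*c + (n:ℝ)*c = x from by ring] at h1
    linarith
  have gzc : ∀ (n : ℤ) (x : ℝ), g (x + (n:ℝ) * c) = g x + (n:ℝ) * c := by
    intro n x
    obtain ⟨m, rfl | rfl⟩ := Int.eq_nat_or_neg n
    · push_cast
      exact gnc m x
    · push_cast
      rw [show x + -(m:ℝ) * c = x - (m:ℝ)*c from by ring, gmc]
      ring
  -- K = g - r*c is strictly monotone with K^[k] = id, hence K = id
  set K : ℝ → ℝ := fun x => g x - (r:ℝ) * c with hKdef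
  have hKx : ∀ x, K x = g x - (r:ℝ) * c := fun x => rfl
  have Kiter : ∀ (n : ℕ) (x : ℝ), K^[n] x = g^[n] x - (n:ℝ) * ((r:ℝ) * c) := by
    intro n
    induction n with
    | zero => intro x; simp
    | succ n ih =>
      intro x
      rw [Function.iterate_succ_apply' K, ih x, Function.iterate_succ_apply' g, hKx]
      have h1 : g^[n] x - (n:ℝ) * ((r:ℝ) * c) = g^[n] x + ((-(n:ℤ)*r : ℤ):ℝ) * c := by
        push_cast; ring
      rw [h1, gzc]
      push_cast; ring
  have Kk : ∀ x, K^[k] x = x := by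
    intro x
    rw [Kiter k x, giter x]
    have : (k:ℝ) * ((r:ℝ) * c) = (r:ℝ) := by
      rw [show (k:ℝ) * ((r:ℝ) * c) = (r:ℝ) * ((k:ℝ) * c) from by ring, hkc]; ring
    linarith
  have Kmono : StrictMono K := by
    intro a b hab
    rw [hKx, hKx]
    exact sub_lt_sub_right (gmono hab) _
  have Kid : ∀ x, K x = x := by
    intro x
    rcases lt_trichotomy (K x) x with hlt | heq | hgt
    · exfalso
      have hdec : ∀ n, K^[n+1] x < x := by
        intro n
        induction n with
        | zero => simpa using hlt
        | succ n ih =>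
          have h1 : K (K^[n+1] x) < K x := Kmono ih
          rw [Function.iterate_succ_apply' K (n+1)]
          linarith
      have := hdec (k-1)
      rw [show k - 1 + 1 = k from by omega, Kk] at this
      exact lt_irrefl x this
    · exact heq
    · exfalso
      have hinc : ∀ n, x < K^[n+1] x := by
        intro n
        induction n with
        | zero => simpa using hgt
        | succ n ih =>
          have h1 : K x < K (K^[n+1] x) := Kmono ih
          rw [Function.iterate_succ_apply' K (n+1)]
          linarith
      have := hinc (k-1)
      rw [show k - 1 + 1 = k from by omega, Kk] at this
      exact lt_irrefl x this
  have gid : ∀ x, g x = x + (r:ℝ) * c := by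
    intro x
    have := Kid x
    rw [hKx] at this
    linarith
  -- conclude V' ≡ 0
  have hfc : ∀ x, f x = (r:ℝ) * c := by
    intro x
    have h1 := hfg (x - (r:ℝ)*c)
    have h2 := gid (x - (r:ℝ)*c)
    have h3 := hgx (x - (r:ℝ)*c)
    have h4 : f (x - (r:ℝ)*c) + deriv V (x - (r:ℝ)*c) = (r:ℝ)*c := by
      rw [h2] at h3; linarith
    rw [h2, show x - (r:ℝ)*c + (r:ℝ)*c = x from by ring] at h1
    rw [h1, h4]
  have hV'0 : ∀ x, deriv V x = 0 := by
    intro x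
    have h3 := hgx x
    rw [gid x, hfc x] at h3
    linarith
  exact fun x y => is_const_of_deriv_eq_zero hVdiff hV'0 x y
end

section
/- Let A, B, C, D ∈ ℝ with ε := √(A² + B² + C² + D²) ≤ 1/4, let V_S be the associated Suris potential and I the Suris first integral. Then I is invariant under the standard map F_{V_S}: for all (x, y) ∈ ℝ², I(x + y + V_S'(x), y + V_S'(x)) = I(x, y). -/
open Real

/-- `E(x) = A sin(2πx) + B cos(2πx) + C sin(4πx) + D cos(4πx)`. -/
noncomputable def Efun (A B C D x : ℝ) : ℝ :=
  A * Real.sin (2 * π * x) + B * Real.cos (2 * π * x) +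
    C * Real.sin (4 * π * x) + D * Real.cos (4 * π * x)

/-- `F(x) = −A cos(2πx) + B sin(2πx) − C cos(4πx) + D sin(4πx)`. -/
noncomputable def Ffun (A B C D x : ℝ) : ℝ :=
  -A * Real.cos (2 * π * x) + B * Real.sin (2 * π * x) -
    C * Real.cos (4 * π * x) + D * Real.sin (4 * π * x)

/-- The derivative of the Suris potential:
`V_S'(x) = (1/π) · arctan (E(x) / (1 + F(x)))`. -/
noncomputable def surisSlope (A B C D x : ℝ) : ℝ :=
  (1 / π) * Real.arctan (Efun A B C D x / (1 + Ffun A B C D x))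

/-- The Suris first integral `I(x,y)`. -/
noncomputable def surisI (A B C D x y : ℝ) : ℝ :=
  -Real.cos (2 * π * y)
    + A * (Real.cos (2 * π * x) + Real.cos (2 * π * (x - y)))
    - B * (Real.sin (2 * π * x) + Real.sin (2 * π * (x - y)))
    + C * Real.cos (2 * π * (2 * x - y))
    - D * Real.sin (2 * π * (2 * x - y))

/-- Proposition 3.1 (Suris): `I` is invariant under the standard map `F_{V_S}`. -/
theorem surisI_invariant_under_standard_map
    (A B C D : ℝ)
    (hε : Real.sqrt (A ^ 2 + B ^ 2 + C ^ 2 + D ^ 2) ≤ 1 / 4) :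
    ∀ x y : ℝ,
      surisI A B C D (x + y + surisSlope A B C D x) (y + surisSlope A B C D x)
        = surisI A B C D x y := by
  intro x y
  have hπ : (π : ℝ) ≠ 0 := Real.pi_ne_zero
  set E := Efun A B C D x with hE
  set F := Ffun A B C D x with hF
  -- bound on F
  have hsum : A ^ 2 + B ^ 2 + C ^ 2 + D ^ 2 ≤ 1 / 16 := by
    nlinarith [Real.sq_sqrt (by positivity : (0:ℝ) ≤ A ^ 2 + B ^ 2 + C ^ 2 + D ^ 2),
      Real.sqrt_nonneg (A ^ 2 + B ^ 2 + C ^ 2 + D ^ 2)]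
  have hFabs : |F| ≤ 1 / 2 := by
    have h1 : |F| ≤ |A| + |B| + |C| + |D| := by
      rw [hF, Ffun]
      calc |-A * Real.cos (2 * π * x) + B * Real.sin (2 * π * x) -
            C * Real.cos (4 * π * x) + D * Real.sin (4 * π * x)|
          ≤ |(-A) * Real.cos (2 * π * x)| + |B * Real.sin (2 * π * x)| +
            |C * Real.cos (4 * π * x)| + |D * Real.sin (4 * π * x)| := by
            have := abs_add_le ((-A) * Real.cos (2 * π * x) + B * Real.sin (2 * π * x) -
              C * Real.cos (4 * π * x)) (D * Real.sin (4 * π * x))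
            have := abs_sub (-A * Real.cos (2 * π * x) + B * Real.sin (2 * π * x))
              (C * Real.cos (4 * π * x))
            have := abs_add_le (-A * Real.cos (2 * π * x)) (B * Real.sin (2 * π * x))
            have h0 : -A * Real.cos (2 * π * x) = (-A) * Real.cos (2 * π * x) := by ring
            linarith [abs_add_le ((-A) * Real.cos (2 * π * x) + B * Real.sin (2 * π * x) -
              C * Real.cos (4 * π * x)) (D * Real.sin (4 * π * x)),
              abs_sub ((-A) * Real.cos (2 * π * x) + B * Real.sin (2 * π * x))
                (C * Real.cos (4 * π * x)),
              abs_add_le ((-A) * Real.cos (2 * π * x)) (B * Real.sin (2 * π * x))]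
        _ ≤ |A| + |B| + |C| + |D| := by
            rw [abs_mul, abs_mul, abs_mul, abs_mul, abs_neg]
            have c1 := Real.abs_cos_le_one (2 * π * x)
            have c2 := Real.abs_sin_le_one (2 * π * x)
            have c3 := Real.abs_cos_le_one (4 * π * x)
            have c4 := Real.abs_sin_le_one (4 * π * x)
            nlinarith [abs_nonneg A, abs_nonneg B, abs_nonneg C, abs_nonneg D]
    have h2 : (|A| + |B| + |C| + |D|) ^ 2 ≤ 4 * (A ^ 2 + B ^ 2 + C ^ 2 + D ^ 2) := by
      have := sq_abs A; have := sq_abs B; have := sq_abs C; have := sq_abs D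
      nlinarith [sq_nonneg (|A| - |B|), sq_nonneg (|A| - |C|), sq_nonneg (|A| - |D|),
        sq_nonneg (|B| - |C|), sq_nonneg (|B| - |D|), sq_nonneg (|C| - |D|)]
    nlinarith [abs_nonneg A, abs_nonneg B, abs_nonneg C, abs_nonneg D, abs_nonneg F]
  have hFpos : 0 < 1 + F := by
    have := abs_le.mp hFabs
    linarith [this.1]
  set s := Real.arctan (E / (1 + F)) with hs
  have hkey : (1 + F) * Real.sin s = E * Real.cos s := by
    have hc : 0 < Real.cos s := Real.cos_arctan_pos _
    have ht : Real.sin s / Real.cos s = E / (1 + F) := by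
      rw [← Real.tan_eq_sin_div_cos, hs, Real.tan_arctan]
    field_simp at ht
    linarith
  have hslope : surisSlope A B C D x = s / π := by
    rw [surisSlope, ← hE, ← hF, ← hs]; ring
  rw [hslope]
  -- expand hkey
  rw [hE, hF, Efun, Ffun] at hkey
  have a7 : 4 * π * x = 2 * π * x + 2 * π * x := by ring
  rw [a7] at hkey
  rw [Real.sin_add, Real.cos_add] at hkey
  -- rewrite the goal's trig arguments
  rw [surisI, surisI]
  have a1 : 2 * π * (x + y + s / π) = 2 * π * x + (2 * π * y + (s + s)) := by
    field_simp; ring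
  have a2 : 2 * π * (y + s / π) = 2 * π * y + (s + s) := by field_simp; ring
  have a3 : 2 * π * (x + y + s / π - (y + s / π)) = 2 * π * x := by ring
  have a4 : 2 * π * (2 * (x + y + s / π) - (y + s / π)) =
      2 * π * x + 2 * π * x + (2 * π * y + (s + s)) := by field_simp; ring
  have a5 : 2 * π * (x - y) = 2 * π * x - 2 * π * y := by ring
  have a6 : 2 * π * (2 * x - y) = 2 * π * x + 2 * π * x - 2 * π * y := by ring
  rw [a1, a2, a3, a4, a5, a6]
  simp only [Real.sin_add, Real.cos_add, Real.sin_sub, Real.cos_sub]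
  linear_combination (2 * (Real.sin (2 * π * y) * Real.cos s +
      Real.cos (2 * π * y) * Real.sin s)) * hkey +
    (Real.sin (2 * π * y) *
        (A * Real.sin (2 * π * x) + B * Real.cos (2 * π * x) +
          C * (2 * Real.sin (2 * π * x) * Real.cos (2 * π * x)) +
          D * (Real.cos (2 * π * x) ^ 2 - Real.sin (2 * π * x) ^ 2)) -
      Real.cos (2 * π * y) *
        (1 + (-A * Real.cos (2 * π * x) + B * Real.sin (2 * π * x) -
          C * (Real.cos (2 * π * x) ^ 2 - Real.sin (2 * π * x) ^ 2) +
          D * (2 * Real.sin (2 * π * x) * Real.cos (2 * π * x))))) *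
      (Real.sin_sq_add_cos_sq s)
end

section
/- For every r > 0 there exists ε* > 0 with the following property: for all A, B, C, D ∈ ℝ with 0 < ε := √(A² + B² + C² + D²) < ε*, for every k ∈ ℤ and every ω ∈ (k − 1/2 + r, k − r) ∪ (k + r, k + 1/2 − r), there exist η ∈ (−1, 1), σ ∈ {−1, +1} and m ∈ ℤ such that |γ(x) − η| ≤ 𝒟(x) for all x, the map g(x) := x + ψ(x) + V_S'(x), where ψ(x) = (σ/(2π))·arccos((γ(x) − η)/𝒟(x)) + V_S'(x)/2 + m, is continuous, strictly increasing and satisfies g(x + 1) = g(x) + 1 for all x, and its translation number equals ω: lim_{n → ∞} g^{∘n}(0)/n = ω. -/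
open Real Filter Set

/-- `α(x) = 1 + F(x)`. -/
noncomputable def alphaF (A B C D x : ℝ) : ℝ := 1 + Ffun A B C D x

/-- `β(x) = E(x)`. -/
noncomputable def betaF (A B C D x : ℝ) : ℝ := Efun A B C D x

/-- `γ(x) = A cos(2πx) − B sin(2πx)`. -/
noncomputable def gammaF (A B C D x : ℝ) : ℝ :=
  A * Real.cos (2 * π * x) - B * Real.sin (2 * π * x)

/-- `𝒟(x) = √(α(x)² + β(x)²)`. -/
noncomputable def Dfun (A B C D x : ℝ) : ℝ :=
  Real.sqrt (alphaF A B C D x ^ 2 + betaF A B C D x ^ 2)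

/-- The graph function `ψ_η^{σ,m}`. -/
noncomputable def psiGraph (A B C D η σ : ℝ) (m : ℤ) (x : ℝ) : ℝ :=
  (σ / (2 * π)) * Real.arccos ((gammaF A B C D x - η) / Dfun A B C D x)
    + surisSlope A B C D x / 2 + (m : ℝ)

/-- The lift of the restriction of the standard map `F_{V_S}` to the invariant graph
`y = ψ(x)`: `g(x) = x + ψ(x) + V_S'(x)`. -/
noncomputable def liftOnGraph (A B C D η σ : ℝ) (m : ℤ) (x : ℝ) : ℝ :=
  x + psiGraph A B C D η σ m x + surisSlope A B C D x


set_option maxHeartbeats 2000000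

theorem my_sin_diff (a b : ℝ) : |Real.sin a - Real.sin b| ≤ |a - b| := by
  rw [Real.sin_sub_sin]
  have h1 : |Real.sin ((a-b)/2)| ≤ |(a-b)/2| := Real.abs_sin_le_abs
  have h2 : |Real.cos ((a+b)/2)| ≤ 1 := Real.abs_cos_le_one _
  have h3 : |(a-b)/2| = |a-b|/2 := by rw [abs_div]; norm_num
  calc |2 * Real.sin ((a-b)/2) * Real.cos ((a+b)/2)|
      = 2 * |Real.sin ((a-b)/2)| * |Real.cos ((a+b)/2)| := by
        rw [abs_mul, abs_mul]; norm_num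
    _ ≤ |a - b| := by nlinarith [abs_nonneg (Real.sin ((a-b)/2)), abs_nonneg ((a-b)/2)]

theorem my_cos_diff (a b : ℝ) : |Real.cos a - Real.cos b| ≤ |a - b| := by
  rw [Real.cos_sub_cos]
  have h1 : |Real.sin ((a-b)/2)| ≤ |(a-b)/2| := Real.abs_sin_le_abs
  have h2 : |Real.sin ((a+b)/2)| ≤ 1 := Real.abs_sin_le_one _
  have h3 : |(a-b)/2| = |a-b|/2 := by rw [abs_div]; norm_num
  calc |-2 * Real.sin ((a+b)/2) * Real.sin ((a-b)/2)|
      = 2 * |Real.sin ((a+b)/2)| * |Real.sin ((a-b)/2)| := by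
        rw [abs_mul, abs_mul]; norm_num
    _ ≤ |a - b| := by nlinarith [abs_nonneg (Real.sin ((a-b)/2)), abs_nonneg (Real.sin ((a+b)/2)), abs_nonneg ((a-b)/2)]

theorem my_arctan_diff (a b : ℝ) : |Real.arctan a - Real.arctan b| ≤ |a - b| := by
  have h : LipschitzWith 1 Real.arctan := by
    apply lipschitzWith_of_nnnorm_deriv_le Real.differentiable_arctan
    intro x
    rw [Real.deriv_arctan, ← NNReal.coe_le_coe]
    push_cast
    rw [Real.norm_eq_abs, abs_of_pos (by positivity), div_le_one (by positivity)]
    nlinarith [sq_nonneg x]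
  simpa [Real.dist_eq] using h.dist_le_mul a b

theorem my_arctan_abs (a : ℝ) : |Real.arctan a| ≤ |a| := by
  simpa using my_arctan_diff a 0

theorem my_arcsin_diff {c : ℝ} (hc : c < 1) {a b : ℝ} (ha : |a| ≤ c) (hb : |b| ≤ c) :
    |Real.arcsin a - Real.arcsin b| ≤ (1 / Real.sqrt (1 - c^2)) * |a - b| := by
  have hc0 : 0 ≤ c := le_trans (abs_nonneg a) ha
  have key : ∀ u v : ℝ, |u| ≤ c → |v| ≤ c → u ≤ v →
      |Real.arcsin v - Real.arcsin u| ≤ (1 / Real.sqrt (1 - c^2)) * (v - u) := by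
    intro u v hu hv huv
    have h1c : (0:ℝ) < 1 - c^2 := by nlinarith
    have hmem : ∀ x ∈ Icc u v, |x| ≤ c := by
      intro x hx
      rw [abs_le] at hu hv ⊢
      exact ⟨le_trans hu.1 hx.1, le_trans hx.2 hv.2⟩
    have hder : ∀ x ∈ Icc u v, HasDerivWithinAt Real.arcsin (1 / Real.sqrt (1 - x^2)) (Icc u v) x := by
      intro x hx
      have hxc := hmem x hx
      rw [abs_le] at hxc
      exact (Real.hasDerivAt_arcsin (by nlinarith) (by nlinarith)).hasDerivWithinAt
    have hbound : ∀ x ∈ Ico u v, ‖(1 : ℝ) / Real.sqrt (1 - x^2)‖ ≤ 1 / Real.sqrt (1 - c^2) := by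
      intro x hx
      have hxc := hmem x (Ico_subset_Icc_self hx)
      have hx2 : 1 - c^2 ≤ 1 - x^2 := by
        have : x^2 ≤ c^2 := sq_le_sq' (by rw [abs_le] at hxc; linarith [hxc.1]) (by rw [abs_le] at hxc; linarith [hxc.2])
        linarith
      rw [Real.norm_eq_abs, abs_of_pos (div_pos one_pos (Real.sqrt_pos.2 (lt_of_lt_of_le h1c hx2)))]
      apply one_div_le_one_div_of_le (Real.sqrt_pos.2 h1c)
      exact Real.sqrt_le_sqrt hx2
    have := norm_image_sub_le_of_norm_deriv_le_segment' hder hbound v (right_mem_Icc.2 huv)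
    rwa [Real.norm_eq_abs] at this
  rcases le_total a b with h | h
  · have := key a b ha hb h
    rw [abs_sub_comm]
    calc |Real.arcsin b - Real.arcsin a| ≤ (1 / Real.sqrt (1 - c^2)) * (b - a) := this
      _ ≤ (1 / Real.sqrt (1 - c^2)) * |a - b| := by
          rw [abs_sub_comm, abs_of_nonneg (by linarith)]
  · have := key b a hb ha h
    calc |Real.arcsin a - Real.arcsin b| ≤ (1 / Real.sqrt (1 - c^2)) * (a - b) := this
      _ ≤ (1 / Real.sqrt (1 - c^2)) * |a - b| := by
          rw [abs_of_nonneg (by linarith)]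

theorem my_arccos_diff {c : ℝ} (hc : c < 1) {a b : ℝ} (ha : |a| ≤ c) (hb : |b| ≤ c) :
    |Real.arccos a - Real.arccos b| ≤ (1 / Real.sqrt (1 - c^2)) * |a - b| := by
  rw [Real.arccos, Real.arccos]
  have := my_arcsin_diff hc ha hb
  rw [show π/2 - Real.arcsin a - (π/2 - Real.arcsin b) = -(Real.arcsin a - Real.arcsin b) by ring, abs_neg]
  exact this

theorem my_arccos_le {a b : ℝ} (ha : -1 ≤ a) (hab : a ≤ b) (hb : b ≤ 1) :
    Real.arccos b ≤ Real.arccos a := by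
  rcases eq_or_lt_of_le hab with rfl | h
  · exact le_refl _
  · exact (Real.strictAntiOn_arccos ⟨ha, le_trans hab hb⟩ ⟨le_trans ha hab, hb⟩ h).le

theorem abs_mul_le_of_le_one {a e s : ℝ} (ha : |a| ≤ e) (hs : |s| ≤ 1) : |a * s| ≤ e := by
  rw [abs_mul]; nlinarith [abs_nonneg a, abs_nonneg s]

theorem abs_add4 (w x y z : ℝ) : |w + x + y + z| ≤ |w| + |x| + |y| + |z| := by
  calc |w + x + y + z| ≤ |w + x + y| + |z| := abs_add_le _ _
    _ ≤ (|w + x| + |y|) + |z| := by linarith [abs_add_le (w+x) y]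
    _ ≤ |w| + |x| + |y| + |z| := by linarith [abs_add_le w x]

theorem Efun_bound {A B C D e : ℝ} (hA : |A| ≤ e) (hB : |B| ≤ e) (hC : |C| ≤ e) (hD : |D| ≤ e)
    (x : ℝ) : |Efun A B C D x| ≤ 4 * e := by
  unfold Efun
  have := abs_add4 (A * Real.sin (2*π*x)) (B * Real.cos (2*π*x)) (C * Real.sin (4*π*x)) (D * Real.cos (4*π*x))
  have h1 := abs_mul_le_of_le_one hA (Real.abs_sin_le_one (2*π*x))
  have h2 := abs_mul_le_of_le_one hB (Real.abs_cos_le_one (2*π*x))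
  have h3 := abs_mul_le_of_le_one hC (Real.abs_sin_le_one (4*π*x))
  have h4 := abs_mul_le_of_le_one hD (Real.abs_cos_le_one (4*π*x))
  linarith

theorem Ffun_bound {A B C D e : ℝ} (hA : |A| ≤ e) (hB : |B| ≤ e) (hC : |C| ≤ e) (hD : |D| ≤ e)
    (x : ℝ) : |Ffun A B C D x| ≤ 4 * e := by
  unfold Ffun
  have := abs_add4 (-A * Real.cos (2*π*x)) (B * Real.sin (2*π*x)) (-(C * Real.cos (4*π*x))) (D * Real.sin (4*π*x))
  have h1 := abs_mul_le_of_le_one (by rwa [abs_neg] : |(-A)| ≤ e) (Real.abs_cos_le_one (2*π*x))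
  have h2 := abs_mul_le_of_le_one hB (Real.abs_sin_le_one (2*π*x))
  have h3 := abs_mul_le_of_le_one hC (Real.abs_cos_le_one (4*π*x))
  have h4 := abs_mul_le_of_le_one hD (Real.abs_sin_le_one (4*π*x))
  rw [abs_neg] at this
  have heq : -A * Real.cos (2*π*x) + B * Real.sin (2*π*x) - C * Real.cos (4*π*x) + D * Real.sin (4*π*x)
      = -A * Real.cos (2*π*x) + B * Real.sin (2*π*x) + (-(C * Real.cos (4*π*x))) + D * Real.sin (4*π*x) := by ring
  rw [heq]
  linarith

theorem trig_term_diff {a e k : ℝ} (ha : |a| ≤ e) (hk : 0 ≤ k) (he : 0 ≤ e)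
    (f : ℝ → ℝ) (hf : ∀ u v, |f u - f v| ≤ |u - v|) (x y : ℝ) :
    |a * f (k*π*x) - a * f (k*π*y)| ≤ e * (4*k) * |x - y| := by
  have h := hf (k*π*x) (k*π*y)
  have hpi : π ≤ 4 := Real.pi_le_four
  have hpi0 : 0 < π := Real.pi_pos
  have h2 : |k*π*x - k*π*y| = k*π*|x-y| := by
    rw [show k*π*x - k*π*y = k*π*(x-y) by ring, abs_mul, abs_of_nonneg (by positivity)]
  calc |a * f (k*π*x) - a * f (k*π*y)| = |a| * |f (k*π*x) - f (k*π*y)| := by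
        rw [← abs_mul]; ring_nf
    _ ≤ e * (k*π*|x-y|) := by rw [← h2]; exact mul_le_mul ha h (abs_nonneg _) he
    _ = (e*k*|x-y|)*π := by ring
    _ ≤ (e*k*|x-y|)*4 := mul_le_mul_of_nonneg_left hpi (by positivity)
    _ = e * (4*k) * |x - y| := by ring

theorem Efun_diff {A B C D e : ℝ} (hA : |A| ≤ e) (hB : |B| ≤ e) (hC : |C| ≤ e) (hD : |D| ≤ e)
    (x y : ℝ) : |Efun A B C D x - Efun A B C D y| ≤ 48 * e * |x - y| := by
  have he : 0 ≤ e := le_trans (abs_nonneg _) hA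
  have h1 := trig_term_diff hA (by norm_num : (0:ℝ) ≤ 2) he Real.sin my_sin_diff x y
  have h2 := trig_term_diff hB (by norm_num : (0:ℝ) ≤ 2) he Real.cos my_cos_diff x y
  have h3 := trig_term_diff hC (by norm_num : (0:ℝ) ≤ 4) he Real.sin my_sin_diff x y
  have h4 := trig_term_diff hD (by norm_num : (0:ℝ) ≤ 4) he Real.cos my_cos_diff x y
  have key := abs_add4 (A * Real.sin (2*π*x) - A * Real.sin (2*π*y)) (B * Real.cos (2*π*x) - B * Real.cos (2*π*y))
    (C * Real.sin (4*π*x) - C * Real.sin (4*π*y)) (D * Real.cos (4*π*x) - D * Real.cos (4*π*y))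
  unfold Efun
  have heq : A * Real.sin (2*π*x) + B * Real.cos (2*π*x) + C * Real.sin (4*π*x) + D * Real.cos (4*π*x)
      - (A * Real.sin (2*π*y) + B * Real.cos (2*π*y) + C * Real.sin (4*π*y) + D * Real.cos (4*π*y))
      = (A * Real.sin (2*π*x) - A * Real.sin (2*π*y)) + (B * Real.cos (2*π*x) - B * Real.cos (2*π*y))
      + (C * Real.sin (4*π*x) - C * Real.sin (4*π*y)) + (D * Real.cos (4*π*x) - D * Real.cos (4*π*y)) := by ring
  rw [heq]
  linarith

theorem Ffun_diff {A B C D e : ℝ} (hA : |A| ≤ e) (hB : |B| ≤ e) (hC : |C| ≤ e) (hD : |D| ≤ e)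
    (x y : ℝ) : |Ffun A B C D x - Ffun A B C D y| ≤ 48 * e * |x - y| := by
  have he : 0 ≤ e := le_trans (abs_nonneg _) hA
  have hA' : |(-A)| ≤ e := by rwa [abs_neg]
  have hC' : |(-C)| ≤ e := by rwa [abs_neg]
  have h1 := trig_term_diff hA' (by norm_num : (0:ℝ) ≤ 2) he Real.cos my_cos_diff x y
  have h2 := trig_term_diff hB (by norm_num : (0:ℝ) ≤ 2) he Real.sin my_sin_diff x y
  have h3 := trig_term_diff hC' (by norm_num : (0:ℝ) ≤ 4) he Real.cos my_cos_diff x y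
  have h4 := trig_term_diff hD (by norm_num : (0:ℝ) ≤ 4) he Real.sin my_sin_diff x y
  have key := abs_add4 (-A * Real.cos (2*π*x) - -A * Real.cos (2*π*y)) (B * Real.sin (2*π*x) - B * Real.sin (2*π*y))
    (-C * Real.cos (4*π*x) - -C * Real.cos (4*π*y)) (D * Real.sin (4*π*x) - D * Real.sin (4*π*y))
  unfold Ffun
  have heq : -A * Real.cos (2*π*x) + B * Real.sin (2*π*x) - C * Real.cos (4*π*x) + D * Real.sin (4*π*x)
      - (-A * Real.cos (2*π*y) + B * Real.sin (2*π*y) - C * Real.cos (4*π*y) + D * Real.sin (4*π*y))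
      = (-A * Real.cos (2*π*x) - -A * Real.cos (2*π*y)) + (B * Real.sin (2*π*x) - B * Real.sin (2*π*y))
      + (-C * Real.cos (4*π*x) - -C * Real.cos (4*π*y)) + (D * Real.sin (4*π*x) - D * Real.sin (4*π*y)) := by ring
  rw [heq]
  linarith

section Bounds
variable {A B C D e : ℝ} (hA : |A| ≤ e) (hB : |B| ≤ e) (hC : |C| ≤ e) (hD : |D| ≤ e)

include hA hB in
theorem gammaF_bound (x : ℝ) : |gammaF A B C D x| ≤ 2 * e := by
  unfold gammaF
  have h1 := abs_mul_le_of_le_one hA (Real.abs_cos_le_one (2*π*x))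
  have h2 := abs_mul_le_of_le_one hB (Real.abs_sin_le_one (2*π*x))
  calc |A * Real.cos (2*π*x) - B * Real.sin (2*π*x)|
      ≤ |A * Real.cos (2*π*x)| + |B * Real.sin (2*π*x)| := abs_sub _ _
    _ ≤ 2 * e := by linarith

include hA hB in
theorem gammaF_diff (x y : ℝ) : |gammaF A B C D x - gammaF A B C D y| ≤ 16 * e * |x - y| := by
  have he : 0 ≤ e := le_trans (abs_nonneg _) hA
  have h1 := trig_term_diff hA (by norm_num : (0:ℝ) ≤ 2) he Real.cos my_cos_diff x y
  have h2 := trig_term_diff hB (by norm_num : (0:ℝ) ≤ 2) he Real.sin my_sin_diff x y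
  unfold gammaF
  have heq : A * Real.cos (2*π*x) - B * Real.sin (2*π*x) - (A * Real.cos (2*π*y) - B * Real.sin (2*π*y))
      = (A * Real.cos (2*π*x) - A * Real.cos (2*π*y)) - (B * Real.sin (2*π*x) - B * Real.sin (2*π*y)) := by ring
  rw [heq]
  calc |(A * Real.cos (2*π*x) - A * Real.cos (2*π*y)) - (B * Real.sin (2*π*x) - B * Real.sin (2*π*y))|
      ≤ |A * Real.cos (2*π*x) - A * Real.cos (2*π*y)| + |B * Real.sin (2*π*x) - B * Real.sin (2*π*y)| := abs_sub _ _
    _ ≤ 16 * e * |x - y| := by linarith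

include hA hB hC hD in
theorem alphaF_bounds (he1 : e ≤ 1/100) (x : ℝ) :
    9/10 ≤ alphaF A B C D x ∧ alphaF A B C D x ≤ 1 + 4*e ∧ 1 - 4*e ≤ alphaF A B C D x := by
  have h := Ffun_bound hA hB hC hD x
  rw [abs_le] at h
  unfold alphaF
  constructor
  · nlinarith
  constructor
  · linarith
  · linarith

include hA hB hC hD in
theorem Dfun_lower (he1 : e ≤ 1/100) (x : ℝ) :
    1 - 4*e ≤ Dfun A B C D x ∧ 9/10 ≤ Dfun A B C D x := by
  obtain ⟨h1, h2, h3⟩ := alphaF_bounds hA hB hC hD he1 x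
  have key : alphaF A B C D x ≤ Dfun A B C D x := by
    unfold Dfun
    calc alphaF A B C D x ≤ |alphaF A B C D x| := le_abs_self _
      _ = Real.sqrt (alphaF A B C D x ^ 2) := (Real.sqrt_sq_eq_abs _).symm
      _ ≤ Real.sqrt (alphaF A B C D x ^ 2 + betaF A B C D x ^ 2) :=
          Real.sqrt_le_sqrt (by nlinarith [sq_nonneg (betaF A B C D x)])
  exact ⟨le_trans h3 key, le_trans h1 key⟩

include hA hB hC hD in
theorem Dfun_upper (he1 : e ≤ 1/100) (x : ℝ) : Dfun A B C D x ≤ 1 + 8*e := by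
  obtain ⟨h1, h2, h3⟩ := alphaF_bounds hA hB hC hD he1 x
  have hb : |betaF A B C D x| ≤ 4*e := Efun_bound hA hB hC hD x
  have he : 0 ≤ e := le_trans (abs_nonneg _) hA
  unfold Dfun
  have : alphaF A B C D x ^ 2 + betaF A B C D x ^ 2 ≤ (1 + 8*e)^2 := by
    have hb2 : betaF A B C D x ^ 2 ≤ (4*e)^2 := by
      rw [abs_le] at hb; nlinarith [hb.1, hb.2]
    nlinarith
  calc Real.sqrt (alphaF A B C D x ^ 2 + betaF A B C D x ^ 2) ≤ Real.sqrt ((1+8*e)^2) :=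
        Real.sqrt_le_sqrt this
    _ = 1 + 8*e := Real.sqrt_sq (by linarith)

include hA hB hC hD in
theorem Dfun_diff (he1 : e ≤ 1/100) (x y : ℝ) :
    |Dfun A B C D x - Dfun A B C D y| ≤ 60 * e * |x - y| := by
  have he : 0 ≤ e := le_trans (abs_nonneg _) hA
  obtain ⟨hx1, hx2⟩ := Dfun_lower hA hB hC hD he1 x
  obtain ⟨hy1, hy2⟩ := Dfun_lower hA hB hC hD he1 y
  have hxu := Dfun_upper hA hB hC hD he1 x
  have hyu := Dfun_upper hA hB hC hD he1 y
  have hsq : ∀ z : ℝ, Dfun A B C D z ^ 2 = alphaF A B C D z ^ 2 + betaF A B C D z ^ 2 := by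
    intro z
    unfold Dfun
    exact Real.sq_sqrt (by positivity)
  have haE := Efun_bound hA hB hC hD x
  have hyE := Efun_bound hA hB hC hD y
  have haF := Ffun_bound hA hB hC hD x
  have hyF := Ffun_bound hA hB hC hD y
  have hdE := Efun_diff hA hB hC hD x y
  have hdF := Ffun_diff hA hB hC hD x y
  have hdiffsq : |Dfun A B C D x ^ 2 - Dfun A B C D y ^ 2| ≤ 106 * e * |x - y| := by
    rw [hsq, hsq]
    have heq : alphaF A B C D x ^ 2 + betaF A B C D x ^ 2 - (alphaF A B C D y ^ 2 + betaF A B C D y ^ 2)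
        = (alphaF A B C D x + alphaF A B C D y) * (alphaF A B C D x - alphaF A B C D y)
        + (betaF A B C D x + betaF A B C D y) * (betaF A B C D x - betaF A B C D y) := by ring
    rw [heq]
    have hαd : alphaF A B C D x - alphaF A B C D y = Ffun A B C D x - Ffun A B C D y := by
      unfold alphaF; ring
    have h1 : |(alphaF A B C D x + alphaF A B C D y) * (alphaF A B C D x - alphaF A B C D y)|
        ≤ (21/10) * (48 * e * |x-y|) := by
      rw [abs_mul, hαd]
      apply mul_le_mul _ hdF (abs_nonneg _) (by norm_num)
      rw [abs_le]
      obtain ⟨ha1, ha2, ha3⟩ := alphaF_bounds hA hB hC hD he1 x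
      obtain ⟨hb1, hb2, hb3⟩ := alphaF_bounds hA hB hC hD he1 y
      constructor <;> nlinarith
    have h2 : |(betaF A B C D x + betaF A B C D y) * (betaF A B C D x - betaF A B C D y)|
        ≤ (1/10) * (48 * e * |x-y|) := by
      rw [abs_mul]
      apply mul_le_mul _ hdE (abs_nonneg _) (by norm_num)
      calc |betaF A B C D x + betaF A B C D y| ≤ |betaF A B C D x| + |betaF A B C D y| := abs_add_le _ _
        _ ≤ 8 * e := by unfold betaF; linarith
        _ ≤ 1/10 := by linarith
    calc |(alphaF A B C D x + alphaF A B C D y) * (alphaF A B C D x - alphaF A B C D y)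
        + (betaF A B C D x + betaF A B C D y) * (betaF A B C D x - betaF A B C D y)|
        ≤ |(alphaF A B C D x + alphaF A B C D y) * (alphaF A B C D x - alphaF A B C D y)|
        + |(betaF A B C D x + betaF A B C D y) * (betaF A B C D x - betaF A B C D y)| := abs_add_le _ _
      _ ≤ 106 * e * |x - y| := by nlinarith [abs_nonneg (x-y)]
  have hfact : |Dfun A B C D x - Dfun A B C D y| * (9/5)
      ≤ |Dfun A B C D x ^ 2 - Dfun A B C D y ^ 2| := by
    have : Dfun A B C D x ^ 2 - Dfun A B C D y ^ 2
        = (Dfun A B C D x - Dfun A B C D y) * (Dfun A B C D x + Dfun A B C D y) := by ring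
    rw [this, abs_mul, abs_of_nonneg (by linarith : (0:ℝ) ≤ Dfun A B C D x + Dfun A B C D y)]
    nlinarith [abs_nonneg (Dfun A B C D x - Dfun A B C D y)]
  nlinarith [abs_nonneg (x - y), abs_nonneg (Dfun A B C D x - Dfun A B C D y)]

end Bounds

section U
variable {A B C D e η : ℝ} (hA : |A| ≤ e) (hB : |B| ≤ e) (hC : |C| ≤ e) (hD : |D| ≤ e)
  (he1 : e ≤ 1/100)

include hA hB hC hD he1 in
theorem gamma_sub_eta_le_Dfun (hη : |η| ≤ 1 - 32*e) (x : ℝ) :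
    |gammaF A B C D x - η| ≤ Dfun A B C D x := by
  have h1 := gammaF_bound (C := C) (D := D) hA hB x
  have h2 := (Dfun_lower hA hB hC hD he1 x).1
  have he : 0 ≤ e := le_trans (abs_nonneg _) hA
  calc |gammaF A B C D x - η| ≤ |gammaF A B C D x| + |η| := abs_sub _ _
    _ ≤ 2*e + (1 - 32*e) := by linarith
    _ ≤ 1 - 4*e := by linarith
    _ ≤ Dfun A B C D x := h2

include hA hB hC hD he1 in
theorem u_plus_eta (hη : |η| ≤ 1) (x : ℝ) :
    |(gammaF A B C D x - η) / Dfun A B C D x + η| ≤ 12 * e := by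
  have h1 := gammaF_bound (C := C) (D := D) hA hB x
  have h2 := (Dfun_lower hA hB hC hD he1 x).2
  have h3 := Dfun_upper hA hB hC hD he1 x
  have h4 := (Dfun_lower hA hB hC hD he1 x).1
  have he : 0 ≤ e := le_trans (abs_nonneg _) hA
  have hD0 : Dfun A B C D x ≠ 0 := by linarith
  have heq : (gammaF A B C D x - η) / Dfun A B C D x + η
      = (gammaF A B C D x + η * (Dfun A B C D x - 1)) / Dfun A B C D x := by
    field_simp
    ring
  rw [heq, abs_div, abs_of_pos (by linarith : (0:ℝ) < Dfun A B C D x)]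
  rw [div_le_iff₀ (by linarith : (0:ℝ) < Dfun A B C D x)]
  have hnum : |gammaF A B C D x + η * (Dfun A B C D x - 1)| ≤ 10 * e := by
    have hd1 : |Dfun A B C D x - 1| ≤ 8*e := by rw [abs_le]; constructor <;> linarith
    calc |gammaF A B C D x + η * (Dfun A B C D x - 1)|
        ≤ |gammaF A B C D x| + |η| * |Dfun A B C D x - 1| := by
          refine le_trans (abs_add_le _ _) ?_
          rw [abs_mul]
    _ ≤ 2*e + 1 * (8*e) := by
          have := mul_le_mul hη hd1 (abs_nonneg _) zero_le_one
          linarith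
    _ = 10 * e := by ring
  nlinarith
end U

section Suris
variable {A B C D e : ℝ} (hA : |A| ≤ e) (hB : |B| ≤ e) (hC : |C| ≤ e) (hD : |D| ≤ e)
  (he1 : e ≤ 1/100)

include hA hB hC hD he1 in
theorem suris_bound (x : ℝ) : |surisSlope A B C D x| ≤ (14/3) * e / π := by
  have h1 := Efun_bound hA hB hC hD x
  have h2 := (alphaF_bounds hA hB hC hD he1 x).1
  have he : 0 ≤ e := le_trans (abs_nonneg _) hA
  have hpi := Real.pi_pos
  unfold surisSlope
  have h2' : (9:ℝ)/10 ≤ 1 + Ffun A B C D x := h2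
  have harg : |Efun A B C D x / (1 + Ffun A B C D x)| ≤ (14/3) * e := by
    rw [abs_div]
    have hα : |1 + Ffun A B C D x| = 1 + Ffun A B C D x := abs_of_pos (by linarith)
    rw [hα, div_le_iff₀ (by linarith)]
    nlinarith [mul_le_mul_of_nonneg_left h2' (by positivity : (0:ℝ) ≤ (14/3)*e)]
  have := le_trans (my_arctan_abs _) harg
  rw [abs_mul, abs_of_pos (by positivity : (0:ℝ) < 1/π)]
  calc 1/π * |Real.arctan (Efun A B C D x / (1 + Ffun A B C D x))| ≤ 1/π * ((14/3)*e) := by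
        apply mul_le_mul_of_nonneg_left this (by positivity)
    _ = (14/3) * e / π := by ring

include hA hB hC hD he1 in
theorem suris_diff (x y : ℝ) : |surisSlope A B C D x - surisSlope A B C D y| ≤ 24 * e * |x - y| := by
  have hEx := Efun_bound hA hB hC hD x
  have hEy := Efun_bound hA hB hC hD y
  obtain ⟨hax1, hax2, hax3⟩ := alphaF_bounds hA hB hC hD he1 x
  obtain ⟨hay1, hay2, hay3⟩ := alphaF_bounds hA hB hC hD he1 y
  have hdE := Efun_diff hA hB hC hD x y
  have hdF := Ffun_diff hA hB hC hD x y
  have he : 0 ≤ e := le_trans (abs_nonneg _) hA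
  have hpi := Real.pi_gt_three
  have hαx : (1 + Ffun A B C D x) = alphaF A B C D x := rfl
  have hαy : (1 + Ffun A B C D y) = alphaF A B C D y := rfl
  have hx0 : alphaF A B C D x ≠ 0 := by linarith
  have hy0 : alphaF A B C D y ≠ 0 := by linarith
  have hquot : |Efun A B C D x / alphaF A B C D x - Efun A B C D y / alphaF A B C D y|
      ≤ 70 * e * |x - y| := by
    rw [div_sub_div _ _ hx0 hy0]
    have hnum : |Efun A B C D x * alphaF A B C D y - alphaF A B C D x * Efun A B C D y|
        ≤ 55 * e * |x - y| := by
      have heq : Efun A B C D x * alphaF A B C D y - alphaF A B C D x * Efun A B C D y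
          = (Efun A B C D x - Efun A B C D y) * alphaF A B C D y
            + Efun A B C D y * (alphaF A B C D y - alphaF A B C D x) := by ring
      rw [heq]
      have hαd : |alphaF A B C D y - alphaF A B C D x| ≤ 48 * e * |x - y| := by
        have : alphaF A B C D y - alphaF A B C D x = -(Ffun A B C D x - Ffun A B C D y) := by
          unfold alphaF; ring
        rw [this, abs_neg]; exact hdF
      calc |(Efun A B C D x - Efun A B C D y) * alphaF A B C D y
            + Efun A B C D y * (alphaF A B C D y - alphaF A B C D x)|
          ≤ |Efun A B C D x - Efun A B C D y| * |alphaF A B C D y|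
            + |Efun A B C D y| * |alphaF A B C D y - alphaF A B C D x| := by
            refine le_trans (abs_add_le _ _) ?_
            rw [abs_mul, abs_mul]
        _ ≤ (48*e*|x-y|) * (11/10) + (4*e) * (48*e*|x-y|) := by
            have h1 : |alphaF A B C D y| ≤ 11/10 := by
              rw [abs_of_pos (by linarith)]; linarith
            have k1 := mul_le_mul hdE h1 (abs_nonneg _) (by positivity)
            have k2 := mul_le_mul hEy hαd (abs_nonneg _) (by linarith : (0:ℝ) ≤ 4*e)
            linarith
        _ ≤ 55 * e * |x - y| := by
            have hd0 : (0:ℝ) ≤ e * |x-y| := mul_nonneg he (abs_nonneg _)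
            nlinarith [mul_le_mul_of_nonneg_right he1 hd0]
    rw [abs_div, abs_of_pos (by nlinarith : (0:ℝ) < alphaF A B C D x * alphaF A B C D y)]
    rw [div_le_iff₀ (by nlinarith)]
    have hd0 : (0:ℝ) ≤ e * |x-y| := mul_nonneg he (abs_nonneg _)
    nlinarith [mul_le_mul_of_nonneg_left (by nlinarith : (81:ℝ)/100 ≤ alphaF A B C D x * alphaF A B C D y) (by positivity : (0:ℝ) ≤ 70*e*|x-y|)]
  unfold surisSlope
  rw [hαx, hαy, ← mul_sub, abs_mul, abs_of_pos (by positivity : (0:ℝ) < 1/π)]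
  have h := le_trans (my_arctan_diff (Efun A B C D x / alphaF A B C D x) (Efun A B C D y / alphaF A B C D y)) hquot
  calc 1/π * |Real.arctan (Efun A B C D x / alphaF A B C D x) - Real.arctan (Efun A B C D y / alphaF A B C D y)|
      ≤ 1/π * (70 * e * |x - y|) := mul_le_mul_of_nonneg_left h (by positivity)
    _ ≤ 24 * e * |x - y| := by
      rw [div_mul_eq_mul_div, one_mul, div_le_iff₀ (by linarith)]
      have hd0 : (0:ℝ) ≤ e * |x-y| := mul_nonneg he (abs_nonneg _)
      nlinarith [mul_le_mul_of_nonneg_left hpi.le (by positivity : (0:ℝ) ≤ 24*e*|x-y|)]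
end Suris

section U
variable {A B C D e η : ℝ} (hA : |A| ≤ e) (hB : |B| ≤ e) (hC : |C| ≤ e) (hD : |D| ≤ e)
  (he1 : e ≤ 1/100)

include hA hB hC hD he1 in
theorem u_diff (hη : |η| ≤ 1 - 32*e) (x y : ℝ) :
    |(gammaF A B C D x - η) / Dfun A B C D x - (gammaF A B C D y - η) / Dfun A B C D y|
      ≤ 85 * e * |x - y| := by
  have he : 0 ≤ e := le_trans (abs_nonneg _) hA
  obtain ⟨hx1, hx2⟩ := Dfun_lower hA hB hC hD he1 x
  obtain ⟨hy1, hy2⟩ := Dfun_lower hA hB hC hD he1 y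
  have hx0 : Dfun A B C D x ≠ 0 := by linarith
  have hy0 : Dfun A B C D y ≠ 0 := by linarith
  have hγd := gammaF_diff (C := C) (D := D) hA hB x y
  have hDd := Dfun_diff hA hB hC hD he1 x y
  have hγη := gamma_sub_eta_le_Dfun hA hB hC hD he1 hη y
  rw [div_sub_div _ _ hx0 hy0]
  have hnum : |(gammaF A B C D x - η) * Dfun A B C D y - Dfun A B C D x * (gammaF A B C D y - η)|
      ≤ (76 * e * |x - y|) * Dfun A B C D y := by
    have heq : (gammaF A B C D x - η) * Dfun A B C D y - Dfun A B C D x * (gammaF A B C D y - η)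
        = (gammaF A B C D x - gammaF A B C D y) * Dfun A B C D y
          + (gammaF A B C D y - η) * (Dfun A B C D y - Dfun A B C D x) := by ring
    rw [heq]
    have h1 : |(gammaF A B C D x - gammaF A B C D y) * Dfun A B C D y|
        ≤ (16 * e * |x - y|) * Dfun A B C D y := by
      rw [abs_mul, abs_of_pos (by linarith : (0:ℝ) < Dfun A B C D y)]
      exact mul_le_mul_of_nonneg_right hγd (by linarith)
    have h2 : |(gammaF A B C D y - η) * (Dfun A B C D y - Dfun A B C D x)|
        ≤ Dfun A B C D y * (60 * e * |x - y|) := by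
      rw [abs_mul]
      have := abs_sub_comm (Dfun A B C D x) (Dfun A B C D y)
      exact mul_le_mul hγη (by rw [abs_sub_comm]; exact hDd) (abs_nonneg _) (by linarith)
    calc |(gammaF A B C D x - gammaF A B C D y) * Dfun A B C D y
          + (gammaF A B C D y - η) * (Dfun A B C D y - Dfun A B C D x)|
        ≤ |(gammaF A B C D x - gammaF A B C D y) * Dfun A B C D y|
          + |(gammaF A B C D y - η) * (Dfun A B C D y - Dfun A B C D x)| := abs_add_le _ _
      _ ≤ (76 * e * |x - y|) * Dfun A B C D y := by nlinarith
  rw [abs_div, abs_of_pos (by nlinarith : (0:ℝ) < Dfun A B C D x * Dfun A B C D y)]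
  rw [div_le_iff₀ (by nlinarith)]
  calc |(gammaF A B C D x - η) * Dfun A B C D y - Dfun A B C D x * (gammaF A B C D y - η)|
      ≤ (76 * e * |x - y|) * Dfun A B C D y := hnum
    _ ≤ 85 * e * |x - y| * (Dfun A B C D x * Dfun A B C D y) := by
        have hd0 : (0:ℝ) ≤ e * |x - y| := mul_nonneg he (abs_nonneg _)
        nlinarith [mul_nonneg hd0 (by linarith : (0:ℝ) ≤ Dfun A B C D y)]

include hA hB hC hD he1 in
theorem u_eta_diff {η' : ℝ} (x : ℝ) :
    |(gammaF A B C D x - η) / Dfun A B C D x - (gammaF A B C D x - η') / Dfun A B C D x|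
      ≤ 2 * |η - η'| := by
  obtain ⟨hx1, hx2⟩ := Dfun_lower hA hB hC hD he1 x
  have heq : (gammaF A B C D x - η) / Dfun A B C D x - (gammaF A B C D x - η') / Dfun A B C D x
      = (η' - η) / Dfun A B C D x := by
    rw [div_sub_div_same]; ring_nf
  rw [heq, abs_div, abs_of_pos (by linarith : (0:ℝ) < Dfun A B C D x)]
  rw [div_le_iff₀ (by linarith)]
  rw [abs_sub_comm]
  nlinarith [abs_nonneg (η - η')]
end U

-- Delta lemmas
noncomputable def Delta (A B C D σ η x : ℝ) : ℝ :=
  σ / (2 * π) * Real.arccos ((gammaF A B C D x - η) / Dfun A B C D x)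
    + (3/2) * surisSlope A B C D x

section DeltaSec
variable {A B C D e η σ c₀ : ℝ} (hA : |A| ≤ e) (hB : |B| ≤ e) (hC : |C| ≤ e) (hD : |D| ≤ e)
  (he1 : e ≤ 1/100) (hσ : σ = 1 ∨ σ = -1) (hc₀ : c₀ < 1)

include hA hB hC hD he1 hσ hc₀ in
theorem Delta_diff (hu : ∀ z, |(gammaF A B C D z - η) / Dfun A B C D z| ≤ c₀)
    (hη : |η| ≤ 1 - 32*e) (x y : ℝ) :
    |Delta A B C D σ η x - Delta A B C D σ η y|
      ≤ (15 * (1 / Real.sqrt (1 - c₀^2)) + 36) * e * |x - y| := by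
  have he : 0 ≤ e := le_trans (abs_nonneg _) hA
  have hpi := Real.pi_gt_three
  have hσ1 : |σ| = 1 := by rcases hσ with rfl | rfl <;> simp
  have hlam1 : 1 ≤ 1 / Real.sqrt (1 - c₀^2) := by
    have hc0 : 0 ≤ c₀ := le_trans (abs_nonneg _) (hu x)
    have h1 : Real.sqrt (1 - c₀^2) ≤ 1 := Real.sqrt_le_one.mpr (by nlinarith)
    have h2 : 0 < Real.sqrt (1 - c₀^2) := Real.sqrt_pos.2 (by nlinarith)
    rw [le_div_iff₀ h2, one_mul]
    exact h1
  set lam := 1 / Real.sqrt (1 - c₀^2) with hlam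
  have harc : |Real.arccos ((gammaF A B C D x - η) / Dfun A B C D x)
      - Real.arccos ((gammaF A B C D y - η) / Dfun A B C D y)| ≤ lam * (85 * e * |x - y|) := by
    refine le_trans (my_arccos_diff hc₀ (hu x) (hu y)) ?_
    exact mul_le_mul_of_nonneg_left (u_diff hA hB hC hD he1 hη x y) (by positivity)
  have hsur := suris_diff hA hB hC hD he1 x y
  have heq : Delta A B C D σ η x - Delta A B C D σ η y
      = σ / (2*π) * (Real.arccos ((gammaF A B C D x - η) / Dfun A B C D x)
          - Real.arccos ((gammaF A B C D y - η) / Dfun A B C D y))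
        + (3/2) * (surisSlope A B C D x - surisSlope A B C D y) := by
    unfold Delta; ring
  rw [heq]
  have hterm1 : |σ / (2*π) * (Real.arccos ((gammaF A B C D x - η) / Dfun A B C D x)
      - Real.arccos ((gammaF A B C D y - η) / Dfun A B C D y))| ≤ 15 * lam * e * |x - y| := by
    rw [abs_mul, abs_div, hσ1, abs_of_pos (by linarith : (0:ℝ) < 2*π)]
    rw [div_mul_eq_mul_div, one_mul, div_le_iff₀ (by linarith)]
    calc |Real.arccos ((gammaF A B C D x - η) / Dfun A B C D x)
        - Real.arccos ((gammaF A B C D y - η) / Dfun A B C D y)| ≤ lam * (85 * e * |x - y|) := harc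
      _ ≤ 15 * lam * e * |x - y| * (2*π) := by
          have h0 : (0:ℝ) ≤ lam * (e * |x-y|) := by positivity
          nlinarith [mul_le_mul_of_nonneg_left hpi.le (by positivity : (0:ℝ) ≤ 30 * (lam * (e * |x-y|)))]
  have hterm2 : |(3/2) * (surisSlope A B C D x - surisSlope A B C D y)| ≤ 36 * e * |x - y| := by
    rw [abs_mul, abs_of_pos (by norm_num : (0:ℝ) < 3/2)]
    nlinarith
  calc |σ / (2*π) * (Real.arccos ((gammaF A B C D x - η) / Dfun A B C D x)
      - Real.arccos ((gammaF A B C D y - η) / Dfun A B C D y))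
      + (3/2) * (surisSlope A B C D x - surisSlope A B C D y)|
      ≤ |σ / (2*π) * (Real.arccos ((gammaF A B C D x - η) / Dfun A B C D x)
        - Real.arccos ((gammaF A B C D y - η) / Dfun A B C D y))|
      + |(3/2) * (surisSlope A B C D x - surisSlope A B C D y)| := abs_add_le _ _
    _ ≤ (15 * lam + 36) * e * |x - y| := by nlinarith
    _ = (15 * (1 / Real.sqrt (1 - c₀^2)) + 36) * e * |x - y| := by rw [hlam]

include hA hB hC hD he1 hσ hc₀ in
theorem Delta_eta_diff {η' : ℝ} (hu : ∀ z, |(gammaF A B C D z - η) / Dfun A B C D z| ≤ c₀)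
    (hu' : ∀ z, |(gammaF A B C D z - η') / Dfun A B C D z| ≤ c₀) (x : ℝ) :
    |Delta A B C D σ η x - Delta A B C D σ η' x|
      ≤ (1 / Real.sqrt (1 - c₀^2)) * |η - η'| := by
  have hpi := Real.pi_gt_three
  have hσ1 : |σ| = 1 := by rcases hσ with rfl | rfl <;> simp
  set lam := 1 / Real.sqrt (1 - c₀^2) with hlam
  have hlam0 : 0 < lam := by
    have hc0 : 0 ≤ c₀ := le_trans (abs_nonneg _) (hu x)
    have h2 : 0 < Real.sqrt (1 - c₀^2) := Real.sqrt_pos.2 (by nlinarith)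
    positivity
  have harc : |Real.arccos ((gammaF A B C D x - η) / Dfun A B C D x)
      - Real.arccos ((gammaF A B C D x - η') / Dfun A B C D x)| ≤ lam * (2 * |η - η'|) := by
    refine le_trans (my_arccos_diff hc₀ (hu x) (hu' x)) ?_
    exact mul_le_mul_of_nonneg_left (u_eta_diff hA hB hC hD he1 x) (by positivity)
  have heq : Delta A B C D σ η x - Delta A B C D σ η' x
      = σ / (2*π) * (Real.arccos ((gammaF A B C D x - η) / Dfun A B C D x)
          - Real.arccos ((gammaF A B C D x - η') / Dfun A B C D x)) := by
    unfold Delta; ring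
  rw [heq, abs_mul, abs_div, hσ1, abs_of_pos (by linarith : (0:ℝ) < 2*π)]
  rw [div_mul_eq_mul_div, one_mul, div_le_iff₀ (by linarith)]
  calc |Real.arccos ((gammaF A B C D x - η) / Dfun A B C D x)
      - Real.arccos ((gammaF A B C D x - η') / Dfun A B C D x)| ≤ lam * (2 * |η - η'|) := harc
    _ ≤ lam * |η - η'| * (2*π) := by
        nlinarith [mul_nonneg hlam0.le (abs_nonneg (η - η')), mul_le_mul_of_nonneg_left hpi.le (by positivity : (0:ℝ) ≤ lam * |η-η'|)]
end DeltaSec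

theorem iter_dist (f g : CircleDeg1Lift) (c : ℝ) (hc : 0 ≤ c)
    (hf2 : ∀ x y : ℝ, |f x - f y| ≤ 2 * |x - y|) (hfg : ∀ x : ℝ, |f x - g x| ≤ c) :
    ∀ n : ℕ, |(⇑f)^[n] 0 - (⇑g)^[n] 0| ≤ c * n * 2^n := by
  intro n
  induction n with
  | zero => simp
  | succ n ih =>
    rw [Function.iterate_succ_apply', Function.iterate_succ_apply']
    have h1 : |f ((⇑f)^[n] 0) - f ((⇑g)^[n] 0)| ≤ 2 * (c * n * 2^n) :=
      le_trans (hf2 _ _) (by nlinarith)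
    have h2 := hfg ((⇑g)^[n] 0)
    have h3 : |f ((⇑f)^[n] 0) - g ((⇑g)^[n] 0)|
        ≤ |f ((⇑f)^[n] 0) - f ((⇑g)^[n] 0)| + |f ((⇑g)^[n] 0) - g ((⇑g)^[n] 0)| := by
      have := abs_add_le (f ((⇑f)^[n] 0) - f ((⇑g)^[n] 0)) (f ((⇑g)^[n] 0) - g ((⇑g)^[n] 0))
      simpa using this
    have hpow : (0:ℝ) < 2^n := by positivity
    calc |f ((⇑f)^[n] 0) - g ((⇑g)^[n] 0)| ≤ 2 * (c * n * 2^n) + c := by linarith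
      _ ≤ c * (n+1 : ℕ) * 2^(n+1 : ℕ) := by
          have h21 : (1:ℝ) ≤ 2^n := by exact_mod_cast Nat.one_le_two_pow (n := n)
          push_cast [pow_succ]
          nlinarith [mul_le_mul_of_nonneg_left h21 hc, mul_nonneg (mul_nonneg hc (Nat.cast_nonneg n)) hpow.le]
  
theorem tau_dist (f g : CircleDeg1Lift) (c : ℝ) (hc : 0 ≤ c)
    (hf2 : ∀ x y : ℝ, |f x - f y| ≤ 2 * |x - y|) (hfg : ∀ x : ℝ, |f x - g x| ≤ c)
    (n : ℕ) (hn : 1 ≤ n) :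
    |f.translationNumber - g.translationNumber| ≤ (2 + c * n * 2^n) / n := by
  have h1 := f.dist_pow_map_zero_mul_translationNumber_le n
  have h2 := g.dist_pow_map_zero_mul_translationNumber_le n
  rw [Real.dist_eq] at h1 h2
  have hp1 : (f ^ n) 0 = (⇑f)^[n] 0 := by rw [f.coe_pow]
  have hp2 : (g ^ n) 0 = (⇑g)^[n] 0 := by rw [g.coe_pow]
  rw [hp1] at h1
  rw [hp2] at h2
  have h3 := iter_dist f g c hc hf2 hfg n
  have hn' : (0:ℝ) < n := by exact_mod_cast hn
  rw [le_div_iff₀ hn']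
  have key : |(n:ℝ) * f.translationNumber - n * g.translationNumber| ≤ 2 + c * n * 2^n := by
    have t1 : |(n:ℝ) * f.translationNumber - (⇑f)^[n] 0| ≤ 1 := by rw [abs_sub_comm]; exact h1
    have t2 : |(⇑g)^[n] 0 - (n:ℝ) * g.translationNumber| ≤ 1 := h2
    calc |(n:ℝ) * f.translationNumber - n * g.translationNumber|
        ≤ |(n:ℝ) * f.translationNumber - (⇑f)^[n] 0| + |(⇑f)^[n] 0 - (n:ℝ) * g.translationNumber| := by
          have := abs_add_le ((n:ℝ) * f.translationNumber - (⇑f)^[n] 0) ((⇑f)^[n] 0 - (n:ℝ) * g.translationNumber)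
          simpa using this
      _ ≤ 1 + (|(⇑f)^[n] 0 - (⇑g)^[n] 0| + |(⇑g)^[n] 0 - (n:ℝ) * g.translationNumber|) := by
          have := abs_add_le ((⇑f)^[n] 0 - (⇑g)^[n] 0) ((⇑g)^[n] 0 - (n:ℝ) * g.translationNumber)
          have h' : |(⇑f)^[n] 0 - (n:ℝ) * g.translationNumber| ≤ |(⇑f)^[n] 0 - (⇑g)^[n] 0| + |(⇑g)^[n] 0 - (n:ℝ) * g.translationNumber| := by
            simpa using this
          linarith
      _ ≤ 2 + c * n * 2^n := by linarith
  calc |f.translationNumber - g.translationNumber| * n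
      = |(n:ℝ) * f.translationNumber - n * g.translationNumber| := by
        rw [← mul_sub, abs_mul, abs_of_pos hn']; ring
    _ ≤ 2 + c * n * 2^n := key

theorem tau_continuousOn {G : ℝ → CircleDeg1Lift} {S : Set ℝ} {lam : ℝ} (hlam : 1 ≤ lam)
    (hLip : ∀ η ∈ S, ∀ x y : ℝ, |G η x - G η y| ≤ 2 * |x - y|)
    (hEta : ∀ η ∈ S, ∀ η' ∈ S, ∀ x : ℝ, |G η x - G η' x| ≤ lam * |η - η'|) :
    ContinuousOn (fun η => (G η).translationNumber) S := by
  rw [Metric.continuousOn_iff]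
  intro η hη ε hε
  set n : ℕ := ⌈(4:ℝ)/ε⌉₊ + 1 with hn
  have hn1 : 1 ≤ n := Nat.le_add_left 1 _
  have hn4 : (4:ℝ)/ε ≤ n := by
    calc (4:ℝ)/ε ≤ ⌈(4:ℝ)/ε⌉₊ := Nat.le_ceil _
      _ ≤ n := by push_cast [hn]; linarith
  have hnpos : (0:ℝ) < n := lt_of_lt_of_le (by positivity) hn4
  refine ⟨ε/(2 * lam * 2^n), by positivity, ?_⟩
  intro η' hη' hd
  rw [Real.dist_eq] at hd ⊢
  set c : ℝ := lam * |η' - η| with hc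
  have hc0 : 0 ≤ c := by positivity
  have hτ := tau_dist (G η') (G η) c hc0 (hLip η' hη') (fun x => hEta η' hη' η hη x) n hn1
  have hbound : (2 + c * n * 2^n) / n ≤ ε/2 + c * 2^n := by
    rw [div_le_iff₀ hnpos]
    have h24 : 2 ≤ ε/2 * n := by
      have heq2 : (4:ℝ)/ε * (ε/2) = 2 := by field_simp; ring
      calc (2:ℝ) = 4/ε * (ε/2) := heq2.symm
        _ ≤ n * (ε/2) := mul_le_mul_of_nonneg_right hn4 (by positivity)
        _ = ε/2 * n := by ring
    nlinarith [mul_nonneg (mul_nonneg hc0 hnpos.le) (by positivity : (0:ℝ) ≤ (2:ℝ)^n)]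
  have hcsmall : c * 2^n < ε/2 := by
    have : c < lam * (ε/(2 * lam * 2^n)) := by
      rw [hc]
      apply mul_lt_mul_of_pos_left hd (by linarith)
    have heq : lam * (ε/(2 * lam * 2^n)) * 2^n = ε/2 := by
      field_simp
    calc c * 2^n < lam * (ε/(2 * lam * 2^n)) * 2^n :=
        mul_lt_mul_of_pos_right this (by positivity)
      _ = ε/2 := heq
  calc |(G η').translationNumber - (G η).translationNumber| ≤ (2 + c * n * 2^n)/n := hτ
    _ ≤ ε/2 + c * 2^n := hbound
    _ < ε := by linarith

theorem Efun_per (A B C D x : ℝ) : Efun A B C D (x+1) = Efun A B C D x := by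
  unfold Efun
  have h2 : 2*π*(x+1) = 2*π*x + 2*π := by ring
  have h4 : 4*π*(x+1) = (4*π*x + 2*π) + 2*π := by ring
  rw [h2, h4, Real.sin_add_two_pi, Real.cos_add_two_pi, Real.sin_add_two_pi,
    Real.cos_add_two_pi, Real.sin_add_two_pi, Real.cos_add_two_pi]

theorem Ffun_per (A B C D x : ℝ) : Ffun A B C D (x+1) = Ffun A B C D x := by
  unfold Ffun
  have h2 : 2*π*(x+1) = 2*π*x + 2*π := by ring
  have h4 : 4*π*(x+1) = (4*π*x + 2*π) + 2*π := by ring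
  rw [h2, h4, Real.sin_add_two_pi, Real.cos_add_two_pi, Real.sin_add_two_pi,
    Real.cos_add_two_pi, Real.sin_add_two_pi, Real.cos_add_two_pi]

theorem gammaF_per (A B C D x : ℝ) : gammaF A B C D (x+1) = gammaF A B C D x := by
  unfold gammaF
  have h2 : 2*π*(x+1) = 2*π*x + 2*π := by ring
  rw [h2, Real.sin_add_two_pi, Real.cos_add_two_pi]

theorem surisSlope_per (A B C D x : ℝ) : surisSlope A B C D (x+1) = surisSlope A B C D x := by
  unfold surisSlope
  rw [Efun_per, Ffun_per]

theorem Dfun_per (A B C D x : ℝ) : Dfun A B C D (x+1) = Dfun A B C D x := by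
  unfold Dfun alphaF betaF
  rw [Efun_per, Ffun_per]

theorem Delta_per (A B C D σ η x : ℝ) : Delta A B C D σ η (x+1) = Delta A B C D σ η x := by
  unfold Delta
  rw [gammaF_per, Dfun_per, surisSlope_per]

theorem lift_eq_Delta (A B C D η σ : ℝ) (m : ℤ) (x : ℝ) :
    liftOnGraph A B C D η σ m x = x + (m : ℝ) + Delta A B C D σ η x := by
  unfold liftOnGraph psiGraph Delta
  ring

theorem lift_per (A B C D η σ : ℝ) (m : ℤ) (x : ℝ) :
    liftOnGraph A B C D η σ m (x+1) = liftOnGraph A B C D η σ m x + 1 := by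
  rw [lift_eq_Delta, lift_eq_Delta, Delta_per]
  ring

theorem lift_strictMono {A B C D η σ : ℝ} {m : ℤ}
    (hΔ : ∀ x y : ℝ, |Delta A B C D σ η x - Delta A B C D σ η y| ≤ (1/2) * |x - y|) :
    StrictMono (liftOnGraph A B C D η σ m) := by
  intro x y hxy
  rw [lift_eq_Delta, lift_eq_Delta]
  have h := hΔ y x
  rw [abs_le] at h
  have habs : |y - x| = y - x := abs_of_pos (by linarith)
  rw [habs] at h
  have := h.1
  linarith

theorem lift_lip2 {A B C D η σ : ℝ} {m : ℤ}
    (hΔ : ∀ x y : ℝ, |Delta A B C D σ η x - Delta A B C D σ η y| ≤ (1/2) * |x - y|) :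
    ∀ x y : ℝ, |liftOnGraph A B C D η σ m x - liftOnGraph A B C D η σ m y| ≤ 2 * |x - y| := by
  intro x y
  rw [lift_eq_Delta, lift_eq_Delta]
  have h := hΔ x y
  have h2 : x + m + Delta A B C D σ η x - (y + m + Delta A B C D σ η y)
      = (x - y) + (Delta A B C D σ η x - Delta A B C D σ η y) := by ring
  rw [h2]
  calc |(x - y) + (Delta A B C D σ η x - Delta A B C D σ η y)|
      ≤ |x - y| + |Delta A B C D σ η x - Delta A B C D σ η y| := abs_add_le _ _
    _ ≤ 2 * |x - y| := by linarith [abs_nonneg (x-y)]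

theorem lift_continuous {A B C D η σ : ℝ} {m : ℤ}
    (hΔ : ∀ x y : ℝ, |Delta A B C D σ η x - Delta A B C D σ η y| ≤ (1/2) * |x - y|) :
    Continuous (liftOnGraph A B C D η σ m) := by
  have : LipschitzWith 2 (liftOnGraph A B C D η σ m) := by
    apply LipschitzWith.of_dist_le_mul
    intro x y
    rw [Real.dist_eq, Real.dist_eq]
    exact_mod_cast lift_lip2 hΔ x y
  exact this.continuous

/-- Proposition 3.5: for small eccentricity, the Suris standard map has invariant
curves of every rotation number in `(k − 1/2 + r, k − r) ∪ (k + r, k + 1/2 − r)`. -/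
theorem suris_map_has_all_rotation_numbers :
    ∀ r : ℝ, 0 < r →
    ∃ εstar : ℝ, 0 < εstar ∧
      ∀ A B C D : ℝ,
        0 < Real.sqrt (A ^ 2 + B ^ 2 + C ^ 2 + D ^ 2) →
        Real.sqrt (A ^ 2 + B ^ 2 + C ^ 2 + D ^ 2) < εstar →
        ∀ k : ℤ, ∀ ω : ℝ,
          ω ∈ Set.Ioo ((k : ℝ) - 1 / 2 + r) ((k : ℝ) - r) ∪
              Set.Ioo ((k : ℝ) + r) ((k : ℝ) + 1 / 2 - r) →
          ∃ η ∈ Set.Ioo (-1 : ℝ) 1, ∃ σ : ℝ, (σ = 1 ∨ σ = -1) ∧ ∃ m : ℤ,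
            (∀ x : ℝ, |gammaF A B C D x - η| ≤ Dfun A B C D x) ∧
            Continuous (liftOnGraph A B C D η σ m) ∧
            StrictMono (liftOnGraph A B C D η σ m) ∧
            (∀ x : ℝ, liftOnGraph A B C D η σ m (x + 1)
              = liftOnGraph A B C D η σ m x + 1) ∧
            Tendsto (fun n : ℕ => (liftOnGraph A B C D η σ m)^[n] 0 / (n : ℝ))
              atTop (nhds ω) := by
  intro r hr
  rcases lt_or_ge r (1/4) with hr4 | hr4
  swap
  · refine ⟨1, one_pos, ?_⟩
    intro A B C D _ _ k ω hω
    exfalso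
    rcases hω with h | h
    · have h1 := h.1; have h2 := h.2; simp only [Set.mem_Ioo] at *; linarith [h.1, h.2]
    · have h1 := h.1; have h2 := h.2; simp only [Set.mem_Ioo] at *; linarith [h.1, h.2]
  · have hπ3 := Real.pi_gt_three
    have hπ4 := Real.pi_le_four
    have hπ0 := Real.pi_pos
    set q := Real.cos (2*π*r) with hqdef
    have hq0 : 0 ≤ q := by
      apply Real.cos_nonneg_of_mem_Icc
      constructor
      · nlinarith
      · nlinarith
    have hq1 : q < 1 := by
      have habs : |2*π*r| ≤ π := by
        rw [abs_of_pos (by positivity)]; nlinarith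
      have := Real.cos_le_one_sub_mul_cos_sq habs
      have hr2 : 0 < (2*π*r)^2 := by positivity
      have hπ2 : 0 < 2/π^2 := by positivity
      nlinarith [mul_pos hπ2 hr2]
    set c₀ := (1+q)/2 with hc₀def
    have hc₀1 : c₀ < 1 := by rw [hc₀def]; linarith
    have hc₀0 : 0 < c₀ := by rw [hc₀def]; linarith
    have hsq0 : 0 < 1 - c₀^2 := by nlinarith
    set lam := 1/Real.sqrt (1 - c₀^2) with hlamdef
    have hsqrt0 : 0 < Real.sqrt (1 - c₀^2) := Real.sqrt_pos.2 hsq0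
    have hlam0 : 0 < lam := by rw [hlamdef]; positivity
    have hlam1 : 1 ≤ lam := by
      rw [hlamdef, le_div_iff₀ hsqrt0, one_mul]
      exact Real.sqrt_le_one.mpr (by nlinarith)
    refine ⟨min (min (r/4) ((1-q)/76)) (min (1/100) (1/(80*lam+80))), ?_, ?_⟩
    · apply lt_min
      · apply lt_min
        · linarith
        · linarith
      · apply lt_min
        · norm_num
        · positivity
    intro A B C D hepos helt k ω hω
    set e := Real.sqrt (A^2+B^2+C^2+D^2) with hedef
    have he0 : 0 ≤ e := Real.sqrt_nonneg _
    have her4 : e ≤ r/4 :=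
      le_of_lt (lt_of_lt_of_le helt (le_trans (min_le_left _ _) (min_le_left _ _)))
    have heq76 : e ≤ (1-q)/76 :=
      le_of_lt (lt_of_lt_of_le helt (le_trans (min_le_left _ _) (min_le_right _ _)))
    have he1 : e ≤ 1/100 :=
      le_of_lt (lt_of_lt_of_le helt (le_trans (min_le_right _ _) (min_le_left _ _)))
    have helam : e ≤ 1/(80*lam+80) :=
      le_of_lt (lt_of_lt_of_le helt (le_trans (min_le_right _ _) (min_le_right _ _)))
    have hA : |A| ≤ e := by
      rw [hedef, ← Real.sqrt_sq_eq_abs]; exact Real.sqrt_le_sqrt (by nlinarith [sq_nonneg B, sq_nonneg C, sq_nonneg D])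
    have hB : |B| ≤ e := by
      rw [hedef, ← Real.sqrt_sq_eq_abs]; exact Real.sqrt_le_sqrt (by nlinarith [sq_nonneg A, sq_nonneg C, sq_nonneg D])
    have hC : |C| ≤ e := by
      rw [hedef, ← Real.sqrt_sq_eq_abs]; exact Real.sqrt_le_sqrt (by nlinarith [sq_nonneg A, sq_nonneg B, sq_nonneg D])
    have hD : |D| ≤ e := by
      rw [hedef, ← Real.sqrt_sq_eq_abs]; exact Real.sqrt_le_sqrt (by nlinarith [sq_nonneg A, sq_nonneg B, sq_nonneg C])
    obtain ⟨σ, hσ, t, ht1, ht2, hωeq⟩ :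
        ∃ σ : ℝ, (σ = 1 ∨ σ = -1) ∧ ∃ t : ℝ, r < t ∧ t < 1/2 - r ∧ ω = (k:ℝ) + σ * t := by
      rcases hω with h | h
      · obtain ⟨h1, h2⟩ := h
        exact ⟨-1, Or.inr rfl, (k:ℝ) - ω, by linarith, by linarith, by ring⟩
      · obtain ⟨h1, h2⟩ := h
        exact ⟨1, Or.inl rfl, ω - (k:ℝ), by linarith, by linarith, by ring⟩
    set θ := 2*π*t with hθdef
    have hθ1 : 2*π*r < θ := by rw [hθdef]; nlinarith
    have hθ2 : θ < π - 2*π*r := by rw [hθdef]; nlinarith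
    have hθ0 : 0 < θ := by nlinarith
    have hθπ : θ < π := by nlinarith
    have h14e : 14*e ≤ 2*π*r := by nlinarith
    have hcos_ub : Real.cos θ ≤ q := by
      rw [hqdef]
      exact Real.cos_le_cos_of_nonneg_of_le_pi (by positivity) hθπ.le hθ1.le
    have hcos_lb : -q ≤ Real.cos θ := by
      have := Real.cos_le_cos_of_nonneg_of_le_pi hθ0.le (by linarith : π - 2*π*r ≤ π) hθ2.le
      rw [Real.cos_pi_sub] at this
      rw [hqdef]; linarith
    set ηp := -Real.cos θ + 26*e with hηpdef
    set ηm := -Real.cos θ - 26*e with hηmdef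
    have hmm : ηm ≤ ηp := by rw [hηpdef, hηmdef]; linarith
    set S := Set.Icc ηm ηp with hSdef
    have hSabs : ∀ η ∈ S, |η| ≤ q + 26*e := by
      intro η hη
      obtain ⟨h1, h2⟩ := hη
      rw [abs_le]
      constructor
      · rw [hηmdef] at h1; linarith
      · rw [hηpdef] at h2; linarith
    have hS1 : ∀ η ∈ S, |η| ≤ 1 - 32*e := by
      intro η hη
      have := hSabs η hη
      linarith
    have huc : ∀ η ∈ S, ∀ z : ℝ, |(gammaF A B C D z - η) / Dfun A B C D z| ≤ c₀ := by
      intro η hη z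
      have h1 := u_plus_eta hA hB hC hD he1 (le_trans (hS1 η hη) (by linarith)) z
      have h2 : |(gammaF A B C D z - η) / Dfun A B C D z|
          ≤ |(gammaF A B C D z - η) / Dfun A B C D z + η| + |η| := by
        have := abs_add_le ((gammaF A B C D z - η) / Dfun A B C D z + η) (-η)
        simpa using this
      have h3 := hSabs η hη
      rw [hc₀def]
      calc |(gammaF A B C D z - η) / Dfun A B C D z| ≤ 12*e + (q + 26*e) := by linarith
        _ ≤ (1+q)/2 := by linarith
    have hkey : (15*lam + 36)*e ≤ 1/2 := by
      rw [le_div_iff₀ (by positivity : (0:ℝ) < 80*lam+80)] at helam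
      nlinarith
    have hΔhalf : ∀ η ∈ S, ∀ x y : ℝ,
        |Delta A B C D σ η x - Delta A B C D σ η y| ≤ (1/2) * |x - y| := by
      intro η hη x y
      have h := Delta_diff hA hB hC hD he1 hσ hc₀1 (huc η hη) (hS1 η hη) x y
      calc |Delta A B C D σ η x - Delta A B C D σ η y|
          ≤ (15 * (1 / Real.sqrt (1 - c₀^2)) + 36) * e * |x - y| := h
        _ = ((15*lam + 36)*e) * |x - y| := by rw [hlamdef]
        _ ≤ (1/2) * |x - y| := mul_le_mul_of_nonneg_right hkey (abs_nonneg _)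
    have hmonoS : ∀ η ∈ S, StrictMono (liftOnGraph A B C D η σ k) := by
      intro η hη
      exact lift_strictMono (hΔhalf η hη)
    set clamp : ℝ → ℝ := fun η => max ηm (min η ηp) with hclampdef
    have hclampS : ∀ η : ℝ, clamp η ∈ S := by
      intro η
      constructor
      · exact le_max_left _ _
      · rw [hclampdef]
        simp only [max_le_iff]
        exact ⟨hmm, min_le_right _ _⟩
    have hclampid : ∀ η ∈ S, clamp η = η := by
      intro η hη
      obtain ⟨h1, h2⟩ := hη
      rw [hclampdef]
      simp only
      rw [min_eq_left h2, max_eq_right h1]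
    set G : ℝ → CircleDeg1Lift := fun η =>
      ⟨⟨liftOnGraph A B C D (clamp η) σ k, (hmonoS _ (hclampS η)).monotone⟩,
        fun x => lift_per A B C D (clamp η) σ k x⟩ with hGdef
    have hGapp : ∀ η x, G η x = liftOnGraph A B C D (clamp η) σ k x := fun _ _ => rfl
    have hGappS : ∀ η ∈ S, ∀ x, G η x = liftOnGraph A B C D η σ k x := by
      intro η hη x
      rw [hGapp, hclampid η hη]
    set ρ : ℝ → ℝ := fun η => (G η).translationNumber with hρdef
    have hρcont : ContinuousOn ρ S := by
      apply tau_continuousOn hlam1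
      · intro η hη x y
        rw [hGappS η hη, hGappS η hη]
        exact lift_lip2 (hΔhalf η hη) x y
      · intro η hη η' hη' x
        rw [hGappS η hη, hGappS η' hη', lift_eq_Delta, lift_eq_Delta]
        have heq : x + (k:ℝ) + Delta A B C D σ η x - (x + (k:ℝ) + Delta A B C D σ η' x)
            = Delta A B C D σ η x - Delta A B C D σ η' x := by ring
        rw [heq]
        have h := Delta_eta_diff hA hB hC hD he1 hσ hc₀1 (huc η hη) (huc η' hη') x
        rw [← hlamdef] at h
        exact h
    -- endpoint arccos estimates
    have hθ14a : 0 ≤ θ - 14*e := by linarith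
    have hθ14b : θ + 14*e ≤ π := by linarith
    have harcp : ∀ x : ℝ, θ + 14*e ≤ Real.arccos ((gammaF A B C D x - ηp) / Dfun A B C D x) := by
      intro x
      have hηpS : ηp ∈ S := ⟨hmm, le_refl _⟩
      have h1 := u_plus_eta hA hB hC hD he1 (le_trans (hS1 ηp hηpS) (by linarith)) x
      rw [abs_le] at h1
      have hu_le : (gammaF A B C D x - ηp) / Dfun A B C D x ≤ Real.cos (θ + 14*e) := by
        have hcd := my_cos_diff (θ + 14*e) θ
        have : |Real.cos (θ + 14*e) - Real.cos θ| ≤ 14*e := by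
          calc |Real.cos (θ + 14*e) - Real.cos θ| ≤ |θ + 14*e - θ| := hcd
            _ = 14*e := by rw [show θ + 14*e - θ = 14*e by ring, abs_of_nonneg (by linarith)]
        rw [abs_le] at this
        have h2 := h1.2
        rw [hηpdef] at h2
        linarith
      have hu_ge : (-1:ℝ) ≤ (gammaF A B C D x - ηp) / Dfun A B C D x := by
        have := huc ηp hηpS x
        rw [abs_le] at this
        linarith [this.1]
      have := my_arccos_le hu_ge hu_le (Real.cos_le_one _)
      rwa [Real.arccos_cos (by linarith) hθ14b] at this
    have harcm : ∀ x : ℝ, Real.arccos ((gammaF A B C D x - ηm) / Dfun A B C D x) ≤ θ - 14*e := by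
      intro x
      have hηmS : ηm ∈ S := ⟨le_refl _, hmm⟩
      have h1 := u_plus_eta hA hB hC hD he1 (le_trans (hS1 ηm hηmS) (by linarith)) x
      rw [abs_le] at h1
      have hu_ge : Real.cos (θ - 14*e) ≤ (gammaF A B C D x - ηm) / Dfun A B C D x := by
        have hcd := my_cos_diff (θ - 14*e) θ
        have : |Real.cos (θ - 14*e) - Real.cos θ| ≤ 14*e := by
          calc |Real.cos (θ - 14*e) - Real.cos θ| ≤ |θ - 14*e - θ| := hcd
            _ = 14*e := by
              rw [show θ - 14*e - θ = -(14*e) by ring, abs_neg, abs_of_nonneg (by linarith)]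
        rw [abs_le] at this
        have h2 := h1.1
        rw [hηmdef] at h2
        linarith
      have hu_le : (gammaF A B C D x - ηm) / Dfun A B C D x ≤ 1 := by
        have := huc ηm hηmS x
        rw [abs_le] at this
        linarith [this.2]
      have := my_arccos_le (Real.neg_one_le_cos _) hu_ge hu_le
      rwa [Real.arccos_cos hθ14a (by linarith)] at this
    have hVp : ∀ x : ℝ, |(3/2) * surisSlope A B C D x| ≤ 7*e/π := by
      intro x
      have := suris_bound hA hB hC hD he1 x
      rw [abs_mul, abs_of_pos (by norm_num : (0:ℝ) < 3/2)]
      calc (3/2) * |surisSlope A B C D x| ≤ (3/2) * ((14/3) * e / π) :=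
          mul_le_mul_of_nonneg_left this (by norm_num)
        _ = 7*e/π := by ring
    have hηpS : ηp ∈ S := ⟨hmm, le_refl _⟩
    have hηmS : ηm ∈ S := ⟨le_refl _, hmm⟩
    have htp : (θ + 14*e)/(2*π) - 7*e/π = t := by
      rw [hθdef]; field_simp; ring
    have htm : (θ - 14*e)/(2*π) + 7*e/π = t := by
      rw [hθdef]; field_simp; ring
    have hΔp : ∀ x : ℝ, σ = 1 → t ≤ Delta A B C D σ ηp x := by
      intro x hσ1
      have ha := harcp x
      have hv := hVp x
      rw [abs_le] at hv
      unfold Delta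
      rw [hσ1]
      have hdiv : (θ + 14*e)/(2*π) ≤ Real.arccos ((gammaF A B C D x - ηp) / Dfun A B C D x) / (2*π) := by
        gcongr
      rw [show (1:ℝ)/(2*π) * Real.arccos ((gammaF A B C D x - ηp) / Dfun A B C D x)
          = Real.arccos ((gammaF A B C D x - ηp) / Dfun A B C D x) / (2*π) by ring]
      have h1 : 1/(2*π) * Real.arccos ((gammaF A B C D x - ηp) / Dfun A B C D x)
          = 1/(2*π) * Real.arccos ((gammaF A B C D x - ηp) / Dfun A B C D x) := rfl
      linarith [hv.1]
    have hΔp' : ∀ x : ℝ, σ = -1 → Delta A B C D σ ηp x ≤ -t := by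
      intro x hσ1
      have ha := harcp x
      have hv := hVp x
      rw [abs_le] at hv
      unfold Delta
      rw [hσ1]
      have hdiv : (θ + 14*e)/(2*π) ≤ Real.arccos ((gammaF A B C D x - ηp) / Dfun A B C D x) / (2*π) := by
        gcongr
      rw [show (-1:ℝ)/(2*π) * Real.arccos ((gammaF A B C D x - ηp) / Dfun A B C D x)
          = -(Real.arccos ((gammaF A B C D x - ηp) / Dfun A B C D x) / (2*π)) by ring]
      linarith [hv.2]
    have hΔm : ∀ x : ℝ, σ = 1 → Delta A B C D σ ηm x ≤ t := by
      intro x hσ1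
      have ha := harcm x
      have hv := hVp x
      rw [abs_le] at hv
      unfold Delta
      rw [hσ1]
      have hdiv : Real.arccos ((gammaF A B C D x - ηm) / Dfun A B C D x) / (2*π) ≤ (θ - 14*e)/(2*π) := by
        gcongr
      rw [show (1:ℝ)/(2*π) * Real.arccos ((gammaF A B C D x - ηm) / Dfun A B C D x)
          = Real.arccos ((gammaF A B C D x - ηm) / Dfun A B C D x) / (2*π) by ring]
      linarith [hv.2]
    have hΔm' : ∀ x : ℝ, σ = -1 → -t ≤ Delta A B C D σ ηm x := by
      intro x hσ1
      have ha := harcm x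
      have hv := hVp x
      rw [abs_le] at hv
      unfold Delta
      rw [hσ1]
      have hdiv : Real.arccos ((gammaF A B C D x - ηm) / Dfun A B C D x) / (2*π) ≤ (θ - 14*e)/(2*π) := by
        gcongr
      rw [show (-1:ℝ)/(2*π) * Real.arccos ((gammaF A B C D x - ηm) / Dfun A B C D x)
          = -(Real.arccos ((gammaF A B C D x - ηm) / Dfun A B C D x) / (2*π)) by ring]
      linarith [hv.1]
    -- translation number endpoint bounds
    have hmem : ω ∈ Set.uIcc (ρ ηm) (ρ ηp) := by
      rw [Set.mem_uIcc]
      rcases hσ with hσ1 | hσ1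
      · left
        constructor
        · apply CircleDeg1Lift.translationNumber_le_of_le_add
          intro x
          rw [hGappS ηm hηmS, lift_eq_Delta, hωeq]
          have hσt : σ * t = t := by rw [hσ1, one_mul]
          have hd := hΔm x hσ1
          linarith
        · apply CircleDeg1Lift.le_translationNumber_of_add_le
          intro x
          rw [hGappS ηp hηpS, lift_eq_Delta, hωeq]
          have hσt : σ * t = t := by rw [hσ1, one_mul]
          have hd := hΔp x hσ1
          linarith
      · right
        constructor
        · apply CircleDeg1Lift.translationNumber_le_of_le_add
          intro x
          rw [hGappS ηp hηpS, lift_eq_Delta, hωeq]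
          have hσt : σ * t = -t := by rw [hσ1]; ring
          have hd := hΔp' x hσ1
          linarith
        · apply CircleDeg1Lift.le_translationNumber_of_add_le
          intro x
          rw [hGappS ηm hηmS, lift_eq_Delta, hωeq]
          have hσt : σ * t = -t := by rw [hσ1]; ring
          have hd := hΔm' x hσ1
          linarith
    have hIVT := intermediate_value_uIcc (by rwa [Set.uIcc_of_le hmm] : ContinuousOn ρ (Set.uIcc ηm ηp))
    obtain ⟨η, hηuIcc, hρη⟩ := hIVT hmem
    rw [Set.uIcc_of_le hmm] at hηuIcc
    have hηS : η ∈ S := hηuIcc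
    refine ⟨η, ?_, σ, hσ, k, ?_, ?_, ?_, ?_, ?_⟩
    · have habs := hSabs η hηS
      rw [abs_le] at habs
      have hq26 : q + 26*e < 1 := by linarith only [heq76, hepos, hq1]
      constructor
      · linarith only [habs.1, hq26]
      · linarith only [habs.2, hq26]
    · intro x
      exact gamma_sub_eta_le_Dfun hA hB hC hD he1 (hS1 η hηS) x
    · exact lift_continuous (hΔhalf η hηS)
    · exact lift_strictMono (hΔhalf η hηS)
    · intro x
      exact lift_per A B C D η σ k x
    · have h := (G η).tendsto_translation_number₀
      have hfun : (fun n : ℕ => ((G η) ^ n) 0 / (n:ℝ))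
          = fun n : ℕ => (liftOnGraph A B C D η σ k)^[n] 0 / (n:ℝ) := by
        funext n
        congr 1
        have hcp : ⇑((G η) ^ n) = (⇑(G η))^[n] := (G η).coe_pow n
        rw [hcp]
        have hc : ⇑(G η) = liftOnGraph A B C D η σ k := by
          funext z
          exact hGappS η hηS z
        rw [hc]
      rw [hfun] at h
      have hτω : (G η).translationNumber = ω := hρη
      rwa [hτω] at h
end

section
/- For all A, B, C, D ∈ ℝ with ε := √(A² + B² + C² + D²) ≤ 1/4, the partial derivative of V'_{A,B,C,D}(x) with respect to the parameter A exists and satisfies π·∂_A V'_{A,B,C,D}(x) = ((1 + F(x))·sin(2πx) + E(x)·cos(2πx)) / (E(x)² + (1 + F(x))²) for every x ∈ ℝ. Moreover, there exists a constant C₀ > 0, independent of the parameters, such that sup_{x ∈ ℝ} |π·∂_A V'_{A,B,C,D}(x) − sin(2πx)| ≤ C₀·ε whenever ε ≤ 1/4. -/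
open Real

lemma sum_abs_le' (A B C D : ℝ) :
    |A| + |B| + |C| + |D| ≤ 2 * Real.sqrt (A ^ 2 + B ^ 2 + C ^ 2 + D ^ 2) := by
  have h := Real.sq_sqrt (by positivity : (0:ℝ) ≤ A ^ 2 + B ^ 2 + C ^ 2 + D ^ 2)
  have hs := Real.sqrt_nonneg (A ^ 2 + B ^ 2 + C ^ 2 + D ^ 2)
  nlinarith [sq_nonneg (|A| - |B|), sq_nonneg (|A| - |C|), sq_nonneg (|A| - |D|),
    sq_nonneg (|B| - |C|), sq_nonneg (|B| - |D|), sq_nonneg (|C| - |D|),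
    sq_abs A, sq_abs B, sq_abs C, sq_abs D,
    abs_nonneg A, abs_nonneg B, abs_nonneg C, abs_nonneg D]

lemma Efun_abs_le (A B C D x : ℝ) : |Efun A B C D x| ≤ |A| + |B| + |C| + |D| := by
  have h1 : |A * Real.sin (2 * π * x)| ≤ |A| := by
    rw [abs_mul]; nlinarith [abs_sin_le_one (2 * π * x), abs_nonneg A, abs_nonneg (Real.sin (2*π*x))]
  have h2 : |B * Real.cos (2 * π * x)| ≤ |B| := by
    rw [abs_mul]; nlinarith [abs_cos_le_one (2 * π * x), abs_nonneg B, abs_nonneg (Real.cos (2*π*x))]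
  have h3 : |C * Real.sin (4 * π * x)| ≤ |C| := by
    rw [abs_mul]; nlinarith [abs_sin_le_one (4 * π * x), abs_nonneg C, abs_nonneg (Real.sin (4*π*x))]
  have h4 : |D * Real.cos (4 * π * x)| ≤ |D| := by
    rw [abs_mul]; nlinarith [abs_cos_le_one (4 * π * x), abs_nonneg D, abs_nonneg (Real.cos (4*π*x))]
  unfold Efun
  calc |A * Real.sin (2 * π * x) + B * Real.cos (2 * π * x) + C * Real.sin (4 * π * x)
      + D * Real.cos (4 * π * x)| ≤ _ := abs_add_le _ _
    _ ≤ |A| + |B| + |C| + |D| := by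
        have := abs_add_le (A * Real.sin (2 * π * x) + B * Real.cos (2 * π * x)) (C * Real.sin (4 * π * x))
        have := abs_add_le (A * Real.sin (2 * π * x)) (B * Real.cos (2 * π * x))
        linarith

lemma Ffun_abs_le (A B C D x : ℝ) : |Ffun A B C D x| ≤ |A| + |B| + |C| + |D| := by
  have h : Ffun A B C D x = Efun B (-A) D (-C) x := by
    unfold Ffun Efun; ring
  have := Efun_abs_le B (-A) D (-C) x
  rw [abs_neg, abs_neg] at this
  rw [h]; linarith

lemma hasDerivAt_suris (A B C D x : ℝ) (hF : 1 + Ffun A B C D x ≠ 0) :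
    HasDerivAt (fun a : ℝ => surisSlope a B C D x)
      (((1 + Ffun A B C D x) * Real.sin (2 * π * x)
          + Efun A B C D x * Real.cos (2 * π * x)) /
        (π * (Efun A B C D x ^ 2 + (1 + Ffun A B C D x) ^ 2))) A := by
  have hE : HasDerivAt (fun a : ℝ => Efun a B C D x) (Real.sin (2 * π * x)) A := by
    unfold Efun
    simpa using ((((hasDerivAt_id A).mul_const (Real.sin (2 * π * x))).add_const
      (B * Real.cos (2 * π * x))).add_const (C * Real.sin (4 * π * x))).add_const
      (D * Real.cos (4 * π * x))
  have hFd : HasDerivAt (fun a : ℝ => 1 + Ffun a B C D x) (-Real.cos (2 * π * x)) A := by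
    unfold Ffun
    have h0 : HasDerivAt (fun a : ℝ => -a * Real.cos (2 * π * x)) (-Real.cos (2 * π * x)) A := by
      simpa using ((hasDerivAt_id A).neg.mul_const (Real.cos (2 * π * x)))
    simpa using ((((h0.add_const (B * Real.sin (2 * π * x))).sub_const
      (C * Real.cos (4 * π * x))).add_const (D * Real.sin (4 * π * x))).const_add 1)
  have hdiv := hE.div hFd hF
  have h := (hdiv.arctan).const_mul (1 / π)
  have hne : Efun A B C D x ^ 2 + (1 + Ffun A B C D x) ^ 2 ≠ 0 := by
    have := sq_nonneg (Efun A B C D x)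
    have h2 : 0 < (1 + Ffun A B C D x) ^ 2 := by positivity
    nlinarith
  refine h.congr_deriv ?_
  simp only [Pi.div_apply]
  have key : 1 + (Efun A B C D x / (1 + Ffun A B C D x)) ^ 2
      = (Efun A B C D x ^ 2 + (1 + Ffun A B C D x) ^ 2) / (1 + Ffun A B C D x) ^ 2 := by
    field_simp
    ring
  rw [key]
  field_simp
  ring

/-- Part of Lemma 4.6: the partial derivative of `V'_{A,B,C,D}(x)` with respect to the
parameter `A` exists, satisfies
`π ∂_A V'(x) = ((1 + F(x)) sin(2πx) + E(x) cos(2πx)) / (E(x)² + (1 + F(x))²)`,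
and `π ∂_A V'(x)` is uniformly `C₀ ε`-close to `sin(2πx)`. -/
theorem partial_derivative_in_A_of_suris_slope :
    (∀ A B C D x : ℝ, Real.sqrt (A ^ 2 + B ^ 2 + C ^ 2 + D ^ 2) ≤ 1 / 4 →
      HasDerivAt (fun a : ℝ => surisSlope a B C D x)
        (((1 + Ffun A B C D x) * Real.sin (2 * π * x)
            + Efun A B C D x * Real.cos (2 * π * x)) /
          (π * (Efun A B C D x ^ 2 + (1 + Ffun A B C D x) ^ 2))) A) ∧
    ∃ C₀ : ℝ, 0 < C₀ ∧
      ∀ A B C D x : ℝ, Real.sqrt (A ^ 2 + B ^ 2 + C ^ 2 + D ^ 2) ≤ 1 / 4 →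
        |π * deriv (fun a : ℝ => surisSlope a B C D x) A - Real.sin (2 * π * x)|
          ≤ C₀ * Real.sqrt (A ^ 2 + B ^ 2 + C ^ 2 + D ^ 2) := by
  have bound : ∀ A B C D x : ℝ, Real.sqrt (A ^ 2 + B ^ 2 + C ^ 2 + D ^ 2) ≤ 1 / 4 →
      |Ffun A B C D x| ≤ 2 * Real.sqrt (A ^ 2 + B ^ 2 + C ^ 2 + D ^ 2) ∧
      |Efun A B C D x| ≤ 2 * Real.sqrt (A ^ 2 + B ^ 2 + C ^ 2 + D ^ 2) := by
    intro A B C D x _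
    exact ⟨(Ffun_abs_le A B C D x).trans (sum_abs_le' A B C D),
      (Efun_abs_le A B C D x).trans (sum_abs_le' A B C D)⟩
  have hFpos : ∀ A B C D x : ℝ, Real.sqrt (A ^ 2 + B ^ 2 + C ^ 2 + D ^ 2) ≤ 1 / 4 →
      (0:ℝ) < 1 + Ffun A B C D x := by
    intro A B C D x hε
    have h := (bound A B C D x hε).1
    have := abs_le.1 h
    linarith
  constructor
  · intro A B C D x hε
    exact hasDerivAt_suris A B C D x (hFpos A B C D x hε).ne'
  · refine ⟨24, by norm_num, ?_⟩
    intro A B C D x hε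
    have hεnn : (0:ℝ) ≤ Real.sqrt (A ^ 2 + B ^ 2 + C ^ 2 + D ^ 2) := Real.sqrt_nonneg _
    have hfp := hFpos A B C D x hε
    have hd := (hasDerivAt_suris A B C D x hfp.ne').deriv
    rw [hd]
    have hs1 : |Real.sin (2 * π * x)| ≤ 1 := abs_sin_le_one _
    have hc1 : |Real.cos (2 * π * x)| ≤ 1 := abs_cos_le_one _
    have habs_f := (bound A B C D x hε).1
    have habs_e := (bound A B C D x hε).2
    set ε := Real.sqrt (A ^ 2 + B ^ 2 + C ^ 2 + D ^ 2) with hεdef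
    set e := Efun A B C D x with hedef
    set f := Ffun A B C D x with hfdef
    set s := Real.sin (2 * π * x) with hsdef
    set c := Real.cos (2 * π * x) with hcdef
    clear_value ε e f s c
    clear hεdef hedef hfdef hsdef hcdef
    have hf' := abs_le.1 habs_f
    have he' := abs_le.1 habs_e
    have hD : 1/4 ≤ e ^ 2 + (1 + f) ^ 2 := by nlinarith [sq_nonneg e]
    have hDpos : (0:ℝ) < e ^ 2 + (1 + f) ^ 2 := by linarith
    have hkey : π * (((1 + f) * s + e * c) / (π * (e ^ 2 + (1 + f) ^ 2)))
        = ((1 + f) * s + e * c) / (e ^ 2 + (1 + f) ^ 2) := by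
      rw [mul_comm π (e ^ 2 + (1 + f) ^ 2), ← div_div]
      field_simp
    rw [hkey]
    have hrw : ((1 + f) * s + e * c) / (e ^ 2 + (1 + f) ^ 2) - s
        = (((1 + f) * s + e * c) - s * (e ^ 2 + (1 + f) ^ 2)) / (e ^ 2 + (1 + f) ^ 2) := by
      field_simp
    rw [hrw, abs_div, abs_of_pos hDpos, div_le_iff₀ hDpos]
    clear hrw hkey hd bound hFpos
    have hf32 : |1 + f| ≤ 3/2 := by
      rw [abs_le]; constructor <;> nlinarith
    have t1' : |f| * |1 + f| ≤ 3 * ε := by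
      calc |f| * |1 + f| ≤ (2 * ε) * (3 / 2) :=
            mul_le_mul habs_f hf32 (abs_nonneg _) (by linarith)
        _ = 3 * ε := by ring
    have t1 : |s * (f * (1 + f))| ≤ 3 * ε := by
      rw [abs_mul, abs_mul]
      calc |s| * (|f| * |1 + f|) ≤ 1 * (3 * ε) :=
            mul_le_mul hs1 t1' (by positivity) (by norm_num)
        _ = 3 * ε := by ring
    have t2 : |e * c| ≤ 2 * ε := by
      rw [abs_mul]
      calc |e| * |c| ≤ |e| * 1 := mul_le_mul_of_nonneg_left hc1 (abs_nonneg e)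
        _ = |e| := mul_one _
        _ ≤ 2 * ε := habs_e
    have he2 : e ^ 2 ≤ ε := by
      have h1 : (0:ℝ) ≤ (2 * ε - |e|) * (2 * ε + |e|) :=
        mul_nonneg (by linarith) (by positivity)
      have h2 : (0:ℝ) ≤ ε * (1 - 4 * ε) := mul_nonneg hεnn (by linarith)
      nlinarith [sq_abs e]
    have t3 : |s * e ^ 2| ≤ ε := by
      rw [abs_mul, abs_of_nonneg (sq_nonneg e)]
      have := mul_le_mul_of_nonneg_right hs1 (sq_nonneg e)
      nlinarith
    have hexp : ((1 + f) * s + e * c) - s * (e ^ 2 + (1 + f) ^ 2)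
        = (-(s * (f * (1 + f))) + e * c) + (-(s * e ^ 2)) := by ring
    have hnum : |((1 + f) * s + e * c) - s * (e ^ 2 + (1 + f) ^ 2)| ≤ 6 * ε := by
      rw [hexp]
      calc |(-(s * (f * (1 + f))) + e * c) + (-(s * e ^ 2))|
          ≤ |(-(s * (f * (1 + f))) + e * c)| + |(-(s * e ^ 2))| := abs_add_le _ _
        _ ≤ |(-(s * (f * (1 + f))))| + |e * c| + |(-(s * e ^ 2))| := by
            have := abs_add_le (-(s * (f * (1 + f)))) (e * c); linarith
        _ ≤ 6 * ε := by rw [abs_neg, abs_neg]; linarith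
    have hfin := mul_nonneg hεnn (by linarith : (0:ℝ) ≤ 24 * (e ^ 2 + (1 + f) ^ 2) - 6)
    nlinarith [hnum, hfin]
end

section
/- Fix parameters P₀ = (A₀, B₀, C₀, D₀) ∈ ℝ⁴ with √(A₀² + B₀² + C₀² + D₀²) < 1/8. Then the pointwise partial derivatives ∂_A V_{P₀}(x), ∂_B V_{P₀}(x), ∂_C V_{P₀}(x), ∂_D V_{P₀}(x) of the map P ↦ V_P(x) exist for every x, and there exist constants K > 0 and ρ > 0 such that for all (α, β, γ, δ) ∈ ℝ⁴ with α² + β² + γ² + δ² < ρ²: ‖V_{(A₀+α, B₀+β, C₀+γ, D₀+δ)} − V_{P₀} − (α·∂_A V_{P₀} + β·∂_B V_{P₀} + γ·∂_C V_{P₀} + δ·∂_D V_{P₀})‖_{C¹} ≤ K·(α² + β² + γ² + δ²), where ‖u‖_{C¹} = sup_{x ∈ [0,1]} |u(x)| + sup_{x ∈ [0,1]} |u'(x)|. -/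
open Real

/-- The Suris potential `V_P(x) = (1/π) ∫₀ˣ arctan (E(ξ)/(1 + F(ξ))) dξ`. -/
noncomputable def surisPotential (A B C D x : ℝ) : ℝ :=
  ∫ ξ in (0 : ℝ)..x, surisSlope A B C D ξ

/-- The `C¹` norm on `[0,1]`: `‖u‖_{C¹} = sup_{[0,1]} |u| + sup_{[0,1]} |u'|`. -/
noncomputable def normC1 (u : ℝ → ℝ) : ℝ :=
  sSup ((fun x => |u x|) '' Set.Icc (0 : ℝ) 1) +
    sSup ((fun x => |deriv u x|) '' Set.Icc (0 : ℝ) 1)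

abbrev P4 : Type := ℝ × ℝ × ℝ × ℝ

noncomputable def slopeQ (q : P4 × ℝ) : ℝ := surisSlope q.1.1 q.1.2.1 q.1.2.2.1 q.1.2.2.2 q.2
noncomputable def EQ (q : P4 × ℝ) : ℝ := Efun q.1.1 q.1.2.1 q.1.2.2.1 q.1.2.2.2 q.2
noncomputable def FQ (q : P4 × ℝ) : ℝ := Ffun q.1.1 q.1.2.1 q.1.2.2.1 q.1.2.2.2 q.2

def Udom : Set (P4 × ℝ) := {q | 0 < 1 + FQ q}

lemma contDiff_EQ : ContDiff ℝ 2 EQ := by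
  have h1 : ContDiff ℝ 2 (fun q : P4 × ℝ => Real.sin (2*π*q.2)) := Real.contDiff_sin.comp (by fun_prop)
  have h2 : ContDiff ℝ 2 (fun q : P4 × ℝ => Real.cos (2*π*q.2)) := Real.contDiff_cos.comp (by fun_prop)
  have h3 : ContDiff ℝ 2 (fun q : P4 × ℝ => Real.sin (4*π*q.2)) := Real.contDiff_sin.comp (by fun_prop)
  have h4 : ContDiff ℝ 2 (fun q : P4 × ℝ => Real.cos (4*π*q.2)) := Real.contDiff_cos.comp (by fun_prop)
  unfold EQ Efun
  fun_prop

lemma contDiff_FQ : ContDiff ℝ 2 FQ := by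
  have h1 : ContDiff ℝ 2 (fun q : P4 × ℝ => Real.sin (2*π*q.2)) := Real.contDiff_sin.comp (by fun_prop)
  have h2 : ContDiff ℝ 2 (fun q : P4 × ℝ => Real.cos (2*π*q.2)) := Real.contDiff_cos.comp (by fun_prop)
  have h3 : ContDiff ℝ 2 (fun q : P4 × ℝ => Real.sin (4*π*q.2)) := Real.contDiff_sin.comp (by fun_prop)
  have h4 : ContDiff ℝ 2 (fun q : P4 × ℝ => Real.cos (4*π*q.2)) := Real.contDiff_cos.comp (by fun_prop)
  unfold FQ Ffun
  fun_prop

lemma isOpen_Udom : IsOpen Udom :=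
  isOpen_lt continuous_const (continuous_const.add contDiff_FQ.continuous)

lemma contDiffOn_slopeQ : ContDiffOn ℝ 2 slopeQ Udom := by
  have hdiv : ContDiffOn ℝ 2 (fun q => EQ q / (1 + FQ q)) Udom :=
    ContDiffOn.div contDiff_EQ.contDiffOn
      ((contDiff_const.add contDiff_FQ).contDiffOn) (fun q hq => ne_of_gt hq)
  have := (contDiff_arctan.comp_contDiffOn hdiv).const_smul (1/π)
  have heq : slopeQ = fun q => (1/π) • Real.arctan (EQ q / (1 + FQ q)) := by
    funext q; simp [slopeQ, surisSlope, EQ, FQ, smul_eq_mul]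
  rw [heq]; exact this

noncomputable def F1 : (P4 × ℝ) → ((P4 × ℝ) →L[ℝ] ℝ) := fderiv ℝ slopeQ
noncomputable def F2 : (P4 × ℝ) → ((P4 × ℝ) →L[ℝ] ((P4 × ℝ) →L[ℝ] ℝ)) := fderiv ℝ F1

lemma contDiffOn_F1 : ContDiffOn ℝ 1 F1 Udom :=
  contDiffOn_slopeQ.fderiv_of_isOpen isOpen_Udom (by norm_num)

lemma continuousOn_F1 : ContinuousOn F1 Udom := contDiffOn_F1.continuousOn

lemma continuousOn_F2 : ContinuousOn F2 Udom :=
  contDiffOn_F1.continuousOn_fderiv_of_isOpen isOpen_Udom (le_refl 1)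

lemma hasFDerivAt_slopeQ {q : P4 × ℝ} (hq : q ∈ Udom) : HasFDerivAt slopeQ (F1 q) q := by
  have := (contDiffOn_slopeQ.differentiableOn (by norm_num) q hq).differentiableAt
    (isOpen_Udom.mem_nhds hq)
  exact this.hasFDerivAt

lemma hasFDerivAt_F1 {q : P4 × ℝ} (hq : q ∈ Udom) : HasFDerivAt F1 (F2 q) q := by
  have := (contDiffOn_F1.differentiableOn one_ne_zero q hq).differentiableAt
    (isOpen_Udom.mem_nhds hq)
  exact this.hasFDerivAt

lemma comp_inl_norm_le (T : (P4 × ℝ) →L[ℝ] ℝ) :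
    ‖T.comp (ContinuousLinearMap.inl ℝ P4 ℝ)‖ ≤ ‖T‖ := by
  refine ContinuousLinearMap.opNorm_le_bound _ (norm_nonneg T) fun w => ?_
  have h1 : T.comp (ContinuousLinearMap.inl ℝ P4 ℝ) w = T (w, 0) := rfl
  have h2 : ‖((w, (0:ℝ)) : P4 × ℝ)‖ = ‖w‖ := by
    simp [Prod.norm_def]
  rw [h1]
  calc ‖T (w,0)‖ ≤ ‖T‖ * ‖((w,(0:ℝ)) : P4 × ℝ)‖ := T.le_opNorm _
  _ = ‖T‖ * ‖w‖ := by rw [h2]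
lemma coord_abs_le (v : P4) :
    |v.1| ≤ ‖v‖ ∧ |v.2.1| ≤ ‖v‖ ∧ |v.2.2.1| ≤ ‖v‖ ∧ |v.2.2.2| ≤ ‖v‖ := by
  have h1 : ‖v.1‖ ≤ ‖v‖ := norm_fst_le v
  have h2 : ‖v.2‖ ≤ ‖v‖ := norm_snd_le v
  have h21 : ‖v.2.1‖ ≤ ‖v.2‖ := norm_fst_le v.2
  have h22 : ‖v.2.2‖ ≤ ‖v.2‖ := norm_snd_le v.2
  have h221 : ‖v.2.2.1‖ ≤ ‖v.2.2‖ := norm_fst_le v.2.2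
  have h222 : ‖v.2.2.2‖ ≤ ‖v.2.2‖ := norm_snd_le v.2.2
  simp only [Real.norm_eq_abs] at *
  exact ⟨h1, le_trans h21 h2, le_trans (le_trans h221 h22) h2, le_trans (le_trans h222 h22) h2⟩

lemma Ffun_pos {A B C D x : ℝ} (hA : |A| ≤ 3/16) (hB : |B| ≤ 3/16)
    (hC : |C| ≤ 3/16) (hD : |D| ≤ 3/16) : 0 < 1 + Ffun A B C D x := by
  have c1 := Real.abs_cos_le_one (2*π*x)
  have s1 := Real.abs_sin_le_one (2*π*x)
  have c2 := Real.abs_cos_le_one (4*π*x)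
  have s2 := Real.abs_sin_le_one (4*π*x)
  have t1 : |A * Real.cos (2*π*x)| ≤ 3/16 := by
    rw [abs_mul]; nlinarith [abs_nonneg A, abs_nonneg (Real.cos (2*π*x))]
  have t2 : |B * Real.sin (2*π*x)| ≤ 3/16 := by
    rw [abs_mul]; nlinarith [abs_nonneg B, abs_nonneg (Real.sin (2*π*x))]
  have t3 : |C * Real.cos (4*π*x)| ≤ 3/16 := by
    rw [abs_mul]; nlinarith [abs_nonneg C, abs_nonneg (Real.cos (4*π*x))]
  have t4 : |D * Real.sin (4*π*x)| ≤ 3/16 := by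
    rw [abs_mul]; nlinarith [abs_nonneg D, abs_nonneg (Real.sin (4*π*x))]
  have := abs_le.mp t1; have := abs_le.mp t2; have := abs_le.mp t3; have := abs_le.mp t4
  unfold Ffun; cases this
  linarith [ (abs_le.mp t1).1, (abs_le.mp t1).2, (abs_le.mp t2).1, (abs_le.mp t3).1, (abs_le.mp t3).2, (abs_le.mp t4).1 ]

lemma ball_subset_Udom {p₀ : P4} (h0 : ‖p₀‖ ≤ 1/8) {p : P4} (hp : ‖p - p₀‖ ≤ 1/16)
    (x : ℝ) : ((p, x) : P4 × ℝ) ∈ Udom := by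
  obtain ⟨a1, a2, a3, a4⟩ := coord_abs_le (p - p₀)
  obtain ⟨b1, b2, b3, b4⟩ := coord_abs_le p₀
  simp only [Prod.fst_sub, Prod.snd_sub] at a1 a2 a3 a4
  have key : ∀ u v : ℝ, |u - v| ≤ 1/16 → |v| ≤ 1/8 → |u| ≤ 3/16 := by
    intro u v h1 h2
    have : u = (u - v) + v := by ring
    rw [this]
    exact (abs_add_le _ _).trans (by linarith)
  have h1 : |p.1| ≤ 3/16 := key _ _ (a1.trans hp) (b1.trans h0)
  have h2 : |p.2.1| ≤ 3/16 := key _ _ (a2.trans hp) (b2.trans h0)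
  have h3 : |p.2.2.1| ≤ 3/16 := key _ _ (a3.trans hp) (b3.trans h0)
  have h4 : |p.2.2.2| ≤ 3/16 := key _ _ (a4.trans hp) (b4.trans h0)
  exact Ffun_pos h1 h2 h3 h4

noncomputable def psiAt (p : P4) (x : ℝ) : P4 →L[ℝ] ℝ :=
  (F1 (p, x)).comp (ContinuousLinearMap.inl ℝ P4 ℝ)

lemma master {p₀ : P4} (h0 : ‖p₀‖ ≤ 1/8) (b : ℝ) :
    ∃ M : ℝ, 0 < M ∧ ∀ h : P4, ‖h‖ ≤ 1/16 → ∀ x ∈ Set.Icc (-b) b,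
      ‖slopeQ (p₀ + h, x) - slopeQ (p₀, x) - psiAt p₀ x h‖ ≤ M * ‖h‖^2 := by
  classical
  set s : Set P4 := Metric.closedBall p₀ (1/16) with hs
  have hKc : IsCompact (s ×ˢ Set.Icc (-b) b) :=
    (isCompact_closedBall _ _).prod isCompact_Icc
  have hmem : ∀ p ∈ s, ∀ x : ℝ, ((p, x) : P4 × ℝ) ∈ Udom := by
    intro p hp x
    exact ball_subset_Udom h0 (by rw [← dist_eq_norm]; exact Metric.mem_closedBall.mp hp) x
  have hsub : s ×ˢ Set.Icc (-b) b ⊆ Udom := by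
    rintro ⟨p, x⟩ ⟨hp, hx⟩
    exact hmem p hp x
  obtain ⟨M₀, hM₀⟩ := hKc.exists_bound_of_continuousOn (f := F2) (continuousOn_F2.mono hsub)
  set M : ℝ := max M₀ 1 with hM
  have hMpos : (0:ℝ) < M := lt_of_lt_of_le one_pos (le_max_right _ _)
  refine ⟨M, hMpos, ?_⟩
  intro h hh x hx
  -- derivative of slice of F1 composed with inl
  set Λ : ((P4 × ℝ) →L[ℝ] ℝ) →L[ℝ] (P4 →L[ℝ] ℝ) :=
    (ContinuousLinearMap.compL ℝ P4 (P4 × ℝ) ℝ).flip (ContinuousLinearMap.inl ℝ P4 ℝ) with hΛ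
  have hΛapp : ∀ T : (P4 × ℝ) →L[ℝ] ℝ, Λ T = T.comp (ContinuousLinearMap.inl ℝ P4 ℝ) := by
    intro T; rfl
  have hψd : ∀ p ∈ s, HasFDerivAt (fun p : P4 => psiAt p x)
      (Λ.comp ((F2 (p, x)).comp (ContinuousLinearMap.inl ℝ P4 ℝ))) p := by
    intro p hp
    have h1 : HasFDerivAt (fun p : P4 => F1 (p, x))
        ((F2 (p, x)).comp (ContinuousLinearMap.inl ℝ P4 ℝ)) p :=
      (hasFDerivAt_F1 (hmem p hp x)).comp p (hasFDerivAt_prodMk_left p x)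
    have := Λ.hasFDerivAt.comp p h1
    simpa [psiAt, hΛapp, Function.comp_def] using this
  have hbound : ∀ p ∈ s,
      ‖Λ.comp ((F2 (p, x)).comp (ContinuousLinearMap.inl ℝ P4 ℝ))‖ ≤ M := by
    intro p hp
    refine ContinuousLinearMap.opNorm_le_bound _ (le_of_lt hMpos) fun v => ?_
    have hv : (Λ.comp ((F2 (p, x)).comp (ContinuousLinearMap.inl ℝ P4 ℝ))) v
        = ((F2 (p, x)) (v, 0)).comp (ContinuousLinearMap.inl ℝ P4 ℝ) := rfl
    rw [hv]
    have hvn : ‖((v, (0:ℝ)) : P4 × ℝ)‖ = ‖v‖ := by simp [Prod.norm_def]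
    calc ‖((F2 (p, x)) (v, 0)).comp (ContinuousLinearMap.inl ℝ P4 ℝ)‖
        ≤ ‖(F2 (p, x)) (v, 0)‖ := comp_inl_norm_le _
      _ ≤ ‖F2 (p, x)‖ * ‖((v, (0:ℝ)) : P4 × ℝ)‖ := (F2 (p, x)).le_opNorm _
      _ = ‖F2 (p, x)‖ * ‖v‖ := by rw [hvn]
      _ ≤ M * ‖v‖ := by
          apply mul_le_mul_of_nonneg_right _ (norm_nonneg v)
          exact le_trans (hM₀ (p, x) ⟨hp, hx⟩) (le_max_left _ _)
  have hψlip : ∀ p ∈ s, ‖psiAt p x - psiAt p₀ x‖ ≤ M * ‖p - p₀‖ := by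
    intro p hp
    exact (convex_closedBall p₀ (1/16)).norm_image_sub_le_of_norm_hasFDerivWithin_le
      (fun q hq => (hψd q hq).hasFDerivWithinAt) hbound
      (Metric.mem_closedBall_self (by norm_num)) hp
  -- now the Taylor remainder
  have hs' : Metric.closedBall p₀ ‖h‖ ⊆ s :=
    Metric.closedBall_subset_closedBall hh
  have hder : ∀ p ∈ Metric.closedBall p₀ ‖h‖,
      HasFDerivWithinAt (fun p : P4 => slopeQ (p, x)) (psiAt p x) (Metric.closedBall p₀ ‖h‖) p := by
    intro p hp
    have := (hasFDerivAt_slopeQ (hmem p (hs' hp) x)).comp p (hasFDerivAt_prodMk_left (𝕜 := ℝ) p x)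
    exact this.hasFDerivWithinAt
  have hC : ∀ p ∈ Metric.closedBall p₀ ‖h‖, ‖psiAt p x - psiAt p₀ x‖ ≤ M * ‖h‖ := by
    intro p hp
    refine (hψlip p (hs' hp)).trans ?_
    apply mul_le_mul_of_nonneg_left _ (le_of_lt hMpos)
    rw [← dist_eq_norm]; exact Metric.mem_closedBall.mp hp
  have key := (convex_closedBall p₀ ‖h‖).norm_image_sub_le_of_norm_hasFDerivWithin_le'
    hder hC (Metric.mem_closedBall_self (norm_nonneg h))
    (by rw [Metric.mem_closedBall, dist_eq_norm, add_sub_cancel_left])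
  rw [add_sub_cancel_left] at key
  calc ‖slopeQ (p₀ + h, x) - slopeQ (p₀, x) - psiAt p₀ x h‖ ≤ M * ‖h‖ * ‖h‖ := key
    _ = M * ‖h‖^2 := by ring

noncomputable def VP (p : P4) (x : ℝ) : ℝ := ∫ ξ in (0:ℝ)..x, slopeQ (p, ξ)

lemma continuous_slice {p₀ : P4} (h0 : ‖p₀‖ ≤ 1/8) {p : P4} (hp : ‖p - p₀‖ ≤ 1/16) :
    Continuous fun ξ => slopeQ (p, ξ) := by
  rw [continuous_iff_continuousAt]
  intro ξ
  have hm : ((p, ξ) : P4 × ℝ) ∈ Udom := ball_subset_Udom h0 hp ξ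
  exact (contDiffOn_slopeQ.continuousOn.continuousAt (isOpen_Udom.mem_nhds hm)).comp
    (continuous_const.prodMk continuous_id).continuousAt

lemma continuous_psi_apply {p₀ : P4} (h0 : ‖p₀‖ ≤ 1/8) (v : P4) :
    Continuous fun ξ => psiAt p₀ ξ v := by
  rw [continuous_iff_continuousAt]
  intro ξ
  have hm : ((p₀, ξ) : P4 × ℝ) ∈ Udom := ball_subset_Udom h0 (by simp) ξ
  have hF1 : ContinuousAt (fun ξ : ℝ => F1 (p₀, ξ)) ξ :=
    (continuousOn_F1.continuousAt (isOpen_Udom.mem_nhds hm)).comp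
      (continuous_const.prodMk continuous_id).continuousAt
  exact ((ContinuousLinearMap.apply ℝ ℝ ((v, 0) : P4 × ℝ)).continuous.continuousAt).comp hF1

lemma hasDerivAt_param {p₀ : P4} (h0 : ‖p₀‖ ≤ 1/8) (v : P4) (hv : ‖v‖ = 1) (x a₀ : ℝ) :
    HasDerivAt (fun a : ℝ => VP (p₀ + (a - a₀) • v) x)
      (∫ ξ in (0:ℝ)..x, psiAt p₀ ξ v) a₀ := by
  obtain ⟨M, hMpos, hM⟩ := master h0 |x|
  rw [hasDerivAt_iff_isLittleO, Asymptotics.isLittleO_iff]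
  intro c hc
  have hDpos : (0:ℝ) < M * |x| + 1 := by positivity
  set δ : ℝ := min (1/16) (c / (M * |x| + 1)) with hδ
  have hδpos : 0 < δ := lt_min (by norm_num) (div_pos hc hDpos)
  have hδ16 : δ ≤ 1/16 := min_le_left _ _
  have hδc : δ * (M * |x| + 1) ≤ c := (le_div_iff₀ hDpos).mp (min_le_right _ _)
  filter_upwards [Metric.closedBall_mem_nhds a₀ hδpos] with a ha
  set t : ℝ := a - a₀ with htdef
  have ht : |t| ≤ δ := by
    rw [htdef, ← Real.dist_eq]; exact Metric.mem_closedBall.mp ha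
  have htv : ‖t • v‖ = |t| := by rw [norm_smul, hv, mul_one, Real.norm_eq_abs]
  have htρ : ‖t • v‖ ≤ 1/16 := by rw [htv]; linarith
  have hpert : ‖(p₀ + t • v) - p₀‖ ≤ 1/16 := by rw [add_sub_cancel_left]; exact htρ
  have hc1 : Continuous fun ξ => slopeQ (p₀ + t • v, ξ) := continuous_slice h0 hpert
  have hc2 : Continuous fun ξ => slopeQ (p₀, ξ) := continuous_slice h0 (by simp)
  have hc3 : Continuous fun ξ => psiAt p₀ ξ (t • v) := continuous_psi_apply h0 _
  have hi1 : IntervalIntegrable (fun ξ => slopeQ (p₀ + t • v, ξ)) MeasureTheory.volume 0 x :=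
    hc1.intervalIntegrable 0 x
  have hi2 : IntervalIntegrable (fun ξ => slopeQ (p₀, ξ)) MeasureTheory.volume 0 x :=
    hc2.intervalIntegrable 0 x
  have hi3 : IntervalIntegrable (fun ξ => psiAt p₀ ξ (t • v)) MeasureTheory.volume 0 x :=
    hc3.intervalIntegrable 0 x
  have hzero : p₀ + ((a₀ : ℝ) - a₀) • v = p₀ := by simp
  have hIcc : Set.uIoc (0:ℝ) x ⊆ Set.Icc (-|x|) |x| := by
    intro ξ hξ
    rcases Set.mem_uIoc.mp hξ with h' | h' <;>
      constructor <;> nlinarith [le_abs_self x, neg_abs_le x, h'.1, h'.2]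
  have hsmul : t • (∫ ξ in (0:ℝ)..x, psiAt p₀ ξ v)
      = ∫ ξ in (0:ℝ)..x, psiAt p₀ ξ (t • v) := by
    rw [← intervalIntegral.integral_smul]
    congr 1; funext ξ
    rw [map_smul]
  have hsplit : VP (p₀ + t • v) x - VP p₀ x - t • (∫ ξ in (0:ℝ)..x, psiAt p₀ ξ v)
      = ∫ ξ in (0:ℝ)..x,
          (slopeQ (p₀ + t • v, ξ) - slopeQ (p₀, ξ) - psiAt p₀ ξ (t • v)) := by
    rw [hsmul, VP, VP, ← intervalIntegral.integral_sub hi1 hi2,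
      ← intervalIntegral.integral_sub (hi1.sub hi2) hi3]
  have hbound : ‖∫ ξ in (0:ℝ)..x,
      (slopeQ (p₀ + t • v, ξ) - slopeQ (p₀, ξ) - psiAt p₀ ξ (t • v))‖
      ≤ (M * ‖t • v‖^2) * |x - 0| := by
    apply intervalIntegral.norm_integral_le_of_norm_le_const
    intro ξ hξ
    exact hM (t • v) htρ ξ (hIcc hξ)
  rw [hzero, hsplit]
  refine hbound.trans ?_
  rw [htv, Real.norm_eq_abs, sub_zero]
  have h1 : M * |x| * |t| ≤ (M * |x|) * δ :=
    mul_le_mul_of_nonneg_left ht (by positivity)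
  have h2 : (M * |x|) * δ ≤ c := by nlinarith
  calc M * |t|^2 * |x| = (M * |x| * |t|) * |t| := by ring
    _ ≤ c * |t| := mul_le_mul_of_nonneg_right (h1.trans h2) (abs_nonneg t)

lemma surisPotential_eq_VP (A B C D x : ℝ) : surisPotential A B C D x = VP (A, B, C, D) x := rfl

/-- Proposition 4.3: the map `P ↦ V_P` is differentiable in the parameters, with a
quadratic error bound in `C¹` norm for its first-order Taylor expansion. -/
theorem suris_potential_first_order_in_parameters
    (A₀ B₀ C₀ D₀ : ℝ)
    (h : Real.sqrt (A₀ ^ 2 + B₀ ^ 2 + C₀ ^ 2 + D₀ ^ 2) < 1 / 8) :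
    ∃ dA dB dC dD : ℝ → ℝ,
      (∀ x, HasDerivAt (fun a : ℝ => surisPotential a B₀ C₀ D₀ x) (dA x) A₀) ∧
      (∀ x, HasDerivAt (fun b : ℝ => surisPotential A₀ b C₀ D₀ x) (dB x) B₀) ∧
      (∀ x, HasDerivAt (fun c : ℝ => surisPotential A₀ B₀ c D₀ x) (dC x) C₀) ∧
      (∀ x, HasDerivAt (fun d : ℝ => surisPotential A₀ B₀ C₀ d x) (dD x) D₀) ∧
      ∃ K ρ : ℝ, 0 < K ∧ 0 < ρ ∧
        ∀ α β γ δ : ℝ, α ^ 2 + β ^ 2 + γ ^ 2 + δ ^ 2 < ρ ^ 2 →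
          normC1 (fun x =>
              surisPotential (A₀ + α) (B₀ + β) (C₀ + γ) (D₀ + δ) x
                - surisPotential A₀ B₀ C₀ D₀ x
                - (α * dA x + β * dB x + γ * dC x + δ * dD x))
            ≤ K * (α ^ 2 + β ^ 2 + γ ^ 2 + δ ^ 2) := by
  set p₀ : P4 := (A₀, B₀, C₀, D₀) with hp₀
  have habs : ∀ u : ℝ, u^2 ≤ A₀ ^ 2 + B₀ ^ 2 + C₀ ^ 2 + D₀ ^ 2 → |u| ≤ 1/8 := by
    intro u hu
    have h1 : |u| = Real.sqrt (u^2) := (Real.sqrt_sq_eq_abs u).symm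
    rw [h1]
    exact le_of_lt (lt_of_le_of_lt (Real.sqrt_le_sqrt hu) h)
  have h0 : ‖p₀‖ ≤ 1/8 := by
    simp only [hp₀, Prod.norm_def, Real.norm_eq_abs, sup_le_iff]
    exact ⟨habs A₀ (by nlinarith [sq_nonneg B₀, sq_nonneg C₀, sq_nonneg D₀]),
      habs B₀ (by nlinarith [sq_nonneg A₀, sq_nonneg C₀, sq_nonneg D₀]),
      habs C₀ (by nlinarith [sq_nonneg A₀, sq_nonneg B₀, sq_nonneg D₀]),
      habs D₀ (by nlinarith [sq_nonneg A₀, sq_nonneg B₀, sq_nonneg C₀])⟩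
  set eA : P4 := (1, 0, 0, 0) with heA
  set eB : P4 := (0, 1, 0, 0) with heB
  set eC : P4 := (0, 0, 1, 0) with heC
  set eD : P4 := (0, 0, 0, 1) with heD
  have hnA : ‖eA‖ = 1 := by simp [heA, Prod.norm_def]
  have hnB : ‖eB‖ = 1 := by simp [heB, Prod.norm_def]
  have hnC : ‖eC‖ = 1 := by simp [heC, Prod.norm_def]
  have hnD : ‖eD‖ = 1 := by simp [heD, Prod.norm_def]
  refine ⟨fun x => ∫ ξ in (0:ℝ)..x, psiAt p₀ ξ eA,
    fun x => ∫ ξ in (0:ℝ)..x, psiAt p₀ ξ eB,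
    fun x => ∫ ξ in (0:ℝ)..x, psiAt p₀ ξ eC,
    fun x => ∫ ξ in (0:ℝ)..x, psiAt p₀ ξ eD, ?_, ?_, ?_, ?_, ?_⟩
  · intro x
    have heq : (fun a : ℝ => surisPotential a B₀ C₀ D₀ x)
        = fun a : ℝ => VP (p₀ + (a - A₀) • eA) x := by
      funext a
      rw [surisPotential_eq_VP]
      congr 1
      simp [hp₀, heA, Prod.ext_iff, smul_eq_mul]
    rw [heq]
    exact hasDerivAt_param h0 eA hnA x A₀
  · intro x
    have heq : (fun b : ℝ => surisPotential A₀ b C₀ D₀ x)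
        = fun b : ℝ => VP (p₀ + (b - B₀) • eB) x := by
      funext b
      rw [surisPotential_eq_VP]
      congr 1
      simp [hp₀, heB, Prod.ext_iff, smul_eq_mul]
    rw [heq]
    exact hasDerivAt_param h0 eB hnB x B₀
  · intro x
    have heq : (fun c : ℝ => surisPotential A₀ B₀ c D₀ x)
        = fun c : ℝ => VP (p₀ + (c - C₀) • eC) x := by
      funext c
      rw [surisPotential_eq_VP]
      congr 1
      simp [hp₀, heC, Prod.ext_iff, smul_eq_mul]
    rw [heq]
    exact hasDerivAt_param h0 eC hnC x C₀
  · intro x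
    have heq : (fun d : ℝ => surisPotential A₀ B₀ C₀ d x)
        = fun d : ℝ => VP (p₀ + (d - D₀) • eD) x := by
      funext d
      rw [surisPotential_eq_VP]
      congr 1
      simp [hp₀, heD, Prod.ext_iff, smul_eq_mul]
    rw [heq]
    exact hasDerivAt_param h0 eD hnD x D₀
  · obtain ⟨M, hMpos, hM⟩ := master h0 1
    refine ⟨2 * M, 1/16, by positivity, by norm_num, ?_⟩
    intro α β γ δ hlt
    set w : P4 := (α, β, γ, δ) with hwdef
    have hsum_nonneg : (0:ℝ) ≤ α ^ 2 + β ^ 2 + γ ^ 2 + δ ^ 2 := by positivity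
    have hcomp : ∀ u : ℝ, u^2 ≤ α ^ 2 + β ^ 2 + γ ^ 2 + δ ^ 2 →
        |u| ≤ Real.sqrt (α ^ 2 + β ^ 2 + γ ^ 2 + δ ^ 2) := by
      intro u hu
      rw [← Real.sqrt_sq_eq_abs u]
      exact Real.sqrt_le_sqrt hu
    have hwnorm : ‖w‖ ≤ Real.sqrt (α ^ 2 + β ^ 2 + γ ^ 2 + δ ^ 2) := by
      simp only [hwdef, Prod.norm_def, Real.norm_eq_abs, sup_le_iff]
      exact ⟨hcomp α (by nlinarith [sq_nonneg β, sq_nonneg γ, sq_nonneg δ]),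
        hcomp β (by nlinarith [sq_nonneg α, sq_nonneg γ, sq_nonneg δ]),
        hcomp γ (by nlinarith [sq_nonneg α, sq_nonneg β, sq_nonneg δ]),
        hcomp δ (by nlinarith [sq_nonneg α, sq_nonneg β, sq_nonneg γ])⟩
    have hsqrt_lt : Real.sqrt (α ^ 2 + β ^ 2 + γ ^ 2 + δ ^ 2) ≤ 1/16 := by
      rw [show ((1:ℝ)/16) = Real.sqrt ((1/16)^2) by
        rw [Real.sqrt_sq (by norm_num)]]
      exact Real.sqrt_le_sqrt (le_of_lt hlt)
    have hw16 : ‖w‖ ≤ 1/16 := hwnorm.trans hsqrt_lt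
    have hw2 : ‖w‖^2 ≤ α ^ 2 + β ^ 2 + γ ^ 2 + δ ^ 2 := by
      have := pow_le_pow_left₀ (norm_nonneg w) hwnorm 2
      rwa [Real.sq_sqrt hsum_nonneg] at this
    -- the remainder integrand
    set R : ℝ → ℝ := fun ξ => slopeQ (p₀ + w, ξ) - slopeQ (p₀, ξ) - psiAt p₀ ξ w with hRdef
    have hpert : ‖(p₀ + w) - p₀‖ ≤ 1/16 := by rw [add_sub_cancel_left]; exact hw16
    have hc1 : Continuous fun ξ => slopeQ (p₀ + w, ξ) := continuous_slice h0 hpert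
    have hc2 : Continuous fun ξ => slopeQ (p₀, ξ) := continuous_slice h0 (by simp)
    have hc3 : Continuous fun ξ => psiAt p₀ ξ w := continuous_psi_apply h0 w
    have hRc : Continuous R := (hc1.sub hc2).sub hc3
    have hcA : Continuous fun ξ => psiAt p₀ ξ eA := continuous_psi_apply h0 eA
    have hcB : Continuous fun ξ => psiAt p₀ ξ eB := continuous_psi_apply h0 eB
    have hcC : Continuous fun ξ => psiAt p₀ ξ eC := continuous_psi_apply h0 eC
    have hcD : Continuous fun ξ => psiAt p₀ ξ eD := continuous_psi_apply h0 eD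
    have hwsum : ∀ ξ : ℝ, psiAt p₀ ξ w = α * psiAt p₀ ξ eA + β * psiAt p₀ ξ eB
        + γ * psiAt p₀ ξ eC + δ * psiAt p₀ ξ eD := by
      intro ξ
      have hw' : w = α • eA + β • eB + γ • eC + δ • eD := by
        simp [hwdef, heA, heB, heC, heD, Prod.ext_iff, smul_eq_mul]
      rw [hw']
      simp [map_add, map_smul, smul_eq_mul]
    -- function identity
    have hfun : (fun x =>
          surisPotential (A₀ + α) (B₀ + β) (C₀ + γ) (D₀ + δ) x
            - surisPotential A₀ B₀ C₀ D₀ x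
            - (α * (∫ ξ in (0:ℝ)..x, psiAt p₀ ξ eA) + β * (∫ ξ in (0:ℝ)..x, psiAt p₀ ξ eB)
              + γ * (∫ ξ in (0:ℝ)..x, psiAt p₀ ξ eC) + δ * (∫ ξ in (0:ℝ)..x, psiAt p₀ ξ eD)))
        = fun x => ∫ ξ in (0:ℝ)..x, R ξ := by
      funext x
      have hpw : p₀ + w = ((A₀ + α, B₀ + β, C₀ + γ, D₀ + δ) : P4) := by
        simp [hp₀, hwdef, Prod.ext_iff]
      have e1 : surisPotential (A₀ + α) (B₀ + β) (C₀ + γ) (D₀ + δ) x = VP (p₀ + w) x := by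
        rw [hpw]; exact surisPotential_eq_VP _ _ _ _ _
      have e2 : surisPotential A₀ B₀ C₀ D₀ x = VP p₀ x := by
        rw [hp₀]; exact surisPotential_eq_VP _ _ _ _ _
      have hlin : α * (∫ ξ in (0:ℝ)..x, psiAt p₀ ξ eA) + β * (∫ ξ in (0:ℝ)..x, psiAt p₀ ξ eB)
            + γ * (∫ ξ in (0:ℝ)..x, psiAt p₀ ξ eC) + δ * (∫ ξ in (0:ℝ)..x, psiAt p₀ ξ eD)
          = ∫ ξ in (0:ℝ)..x, psiAt p₀ ξ w := by
        rw [← intervalIntegral.integral_const_mul, ← intervalIntegral.integral_const_mul,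
          ← intervalIntegral.integral_const_mul, ← intervalIntegral.integral_const_mul,
          ← intervalIntegral.integral_add (f := fun ξ => α * psiAt p₀ ξ eA)
            (g := fun ξ => β * psiAt p₀ ξ eB) ((continuous_const.mul hcA).intervalIntegrable 0 x)
            ((continuous_const.mul hcB).intervalIntegrable 0 x),
          ← intervalIntegral.integral_add
            (f := fun ξ => α * psiAt p₀ ξ eA + β * psiAt p₀ ξ eB) (g := fun ξ => γ * psiAt p₀ ξ eC)
              (((continuous_const.mul hcA).add (continuous_const.mul hcB)).intervalIntegrable 0 x)
            ((continuous_const.mul hcC).intervalIntegrable 0 x),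
          ← intervalIntegral.integral_add
            (f := fun ξ => α * psiAt p₀ ξ eA + β * psiAt p₀ ξ eB + γ * psiAt p₀ ξ eC)
              (g := fun ξ => δ * psiAt p₀ ξ eD)
              ((((continuous_const.mul hcA).add (continuous_const.mul hcB)).add
              (continuous_const.mul hcC)).intervalIntegrable 0 x)
            ((continuous_const.mul hcD).intervalIntegrable 0 x)]
        simp only [hwsum]
      rw [e1, e2, hlin, hRdef, VP, VP,
        ← intervalIntegral.integral_sub (hc1.intervalIntegrable 0 x) (hc2.intervalIntegrable 0 x),
        ← intervalIntegral.integral_sub (f := fun ξ => slopeQ (p₀ + w, ξ) - slopeQ (p₀, ξ))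
          (g := fun ξ => psiAt p₀ ξ w) ((hc1.sub hc2).intervalIntegrable 0 x)
          (hc3.intervalIntegrable 0 x)]
    rw [hfun, normC1]
    -- pointwise bounds
    have hRb : ∀ ξ ∈ Set.Icc (-1:ℝ) 1, ‖R ξ‖ ≤ M * ‖w‖^2 := fun ξ hξ => hM w hw16 ξ hξ
    have hIb : ∀ x ∈ Set.Icc (0:ℝ) 1, |∫ ξ in (0:ℝ)..x, R ξ| ≤ M * ‖w‖^2 := by
      intro x hx
      have hsb : ∀ ξ ∈ Set.uIoc (0:ℝ) x, ‖R ξ‖ ≤ M * ‖w‖^2 := by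
        intro ξ hξ
        rcases Set.mem_uIoc.mp hξ with h' | h'
        · exact hRb ξ ⟨by linarith [h'.1], by linarith [h'.2, hx.2]⟩
        · exact hRb ξ ⟨by linarith [h'.1, hx.1], by linarith [h'.2]⟩
      have := intervalIntegral.norm_integral_le_of_norm_le_const hsb
      rw [Real.norm_eq_abs] at this
      refine this.trans ?_
      rw [sub_zero]
      have hxabs : |x| ≤ 1 := abs_le.mpr ⟨by linarith [hx.1], hx.2⟩
      have hstep : M * ‖w‖^2 * |x| ≤ M * ‖w‖^2 * 1 :=
        mul_le_mul_of_nonneg_left hxabs (by positivity)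
      linarith
    have hderiv : ∀ x : ℝ, HasDerivAt (fun y => ∫ ξ in (0:ℝ)..y, R ξ) (R x) x := by
      intro x
      exact intervalIntegral.integral_hasDerivAt_right (hRc.intervalIntegrable 0 x)
        hRc.stronglyMeasurable.stronglyMeasurableAtFilter hRc.continuousAt
    have hDb : ∀ x ∈ Set.Icc (0:ℝ) 1, |deriv (fun y => ∫ ξ in (0:ℝ)..y, R ξ) x| ≤ M * ‖w‖^2 := by
      intro x hx
      rw [(hderiv x).deriv]
      exact hRb x ⟨by linarith [hx.1], hx.2⟩
    have hMw : (0:ℝ) ≤ M * ‖w‖^2 := mul_nonneg hMpos.le (sq_nonneg _)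
    have hs1 : sSup ((fun x => |∫ ξ in (0:ℝ)..x, R ξ|) '' Set.Icc (0:ℝ) 1) ≤ M * ‖w‖^2 := by
      apply Real.sSup_le _ hMw
      rintro y ⟨x, hx, rfl⟩
      exact hIb x hx
    have hs2 : sSup ((fun x => |deriv (fun y => ∫ ξ in (0:ℝ)..y, R ξ) x|) '' Set.Icc (0:ℝ) 1)
        ≤ M * ‖w‖^2 := by
      apply Real.sSup_le _ hMw
      rintro y ⟨x, hx, rfl⟩
      exact hDb x hx
    calc sSup ((fun x => |∫ ξ in (0:ℝ)..x, R ξ|) '' Set.Icc (0:ℝ) 1)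
        + sSup ((fun x => |deriv (fun y => ∫ ξ in (0:ℝ)..y, R ξ) x|) '' Set.Icc (0:ℝ) 1)
        ≤ M * ‖w‖^2 + M * ‖w‖^2 := add_le_add hs1 hs2
      _ = 2 * M * ‖w‖^2 := by ring
      _ ≤ 2 * M * (α ^ 2 + β ^ 2 + γ ^ 2 + δ ^ 2) :=
          mul_le_mul_of_nonneg_left hw2 (by positivity)
end

section
/- Let V_S : ℝ → ℝ be C² and W : ℝ → ℝ be C¹, both with bounded derivatives. Let q ≥ 1 and p be integers, and let (x_k)_{k ∈ ℤ} and (x'_k)_{k ∈ ℤ} be sequences satisfying x_{k+1} − 2x_k + x_{k−1} = V_S'(x_k) and x'_{k+1} − 2x'_k + x'_{k−1} = V_S'(x'_k) + W'(x'_k) for all k, with x_{k+q} = x_k + p and x'_{k+q} = x'_k + p for all k, and x'_0 = x_0. Suppose D ≥ 0 is such that |x_k − x'_k| ≤ D for all k. Then, setting A_S = Σ_{k=0}^{q−1} [½(x_{k+1} − x_k)² + V_S(x_k)] and A = Σ_{k=0}^{q−1} [½(x'_{k+1} − x'_k)² + V_S(x'_k) + W(x'_k)], one has |A − A_S − Σ_{k=0}^{q−1}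 W(x_k)| ≤ q·(2D² + ½·(sup|V_S''|)·D² + (sup|W'|)·D). -/
open Real

lemma lip_of_deriv_bound (g : ℝ → ℝ) (hg : Differentiable ℝ g) (M : ℝ)
    (hM : ∀ x, |deriv g x| ≤ M) (a b : ℝ) : |g b - g a| ≤ M * |b - a| := by
  have := Convex.norm_image_sub_le_of_norm_deriv_le (f := g)
    (s := Set.univ) (fun y _ => hg y)
    (fun y _ => hM y) convex_univ (Set.mem_univ a) (Set.mem_univ b)
  simpa [Real.norm_eq_abs] using this

lemma taylor_bound (f : ℝ → ℝ) (hf : ContDiff ℝ 2 f) (M : ℝ)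
    (hM : ∀ x, |deriv (deriv f) x| ≤ M) (a b : ℝ) :
    |f b - f a - deriv f a * (b - a)| ≤ M / 2 * (b - a) ^ 2 := by
  have hf1 : ContDiff ℝ 1 (deriv f) := (contDiff_succ_iff_deriv.mp hf).2.2
  have hfd : Differentiable ℝ f := hf.differentiable (by norm_num)
  have hlip := lip_of_deriv_bound (deriv f) (hf1.differentiable (by norm_num)) M hM
  have hderiv : ∀ s ∈ Set.uIcc (0:ℝ) 1,
      HasDerivAt (fun s : ℝ => f (a + s * (b - a))) (deriv f (a + s * (b-a)) * (b - a)) s := by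
    intro s _
    have h1 : HasDerivAt (fun s : ℝ => a + s * (b - a)) (b - a) s := by
      simpa using ((hasDerivAt_id s).mul_const (b - a)).const_add a
    exact ((hfd (a + s * (b-a))).hasDerivAt.comp s h1)
  have hcont : Continuous fun s : ℝ => deriv f (a + s * (b - a)) * (b - a) := by
    exact ((hf1.continuous).comp (by continuity)).mul continuous_const
  have hint := intervalIntegral.integral_eq_sub_of_hasDerivAt hderiv
    (hcont.intervalIntegrable 0 1)
  simp only [one_mul, zero_mul, add_zero, add_sub_cancel] at hint
  have hconst : ∫ _s in (0:ℝ)..1, deriv f a * (b - a) = deriv f a * (b - a) := by simp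
  have hsub : f b - f a - deriv f a * (b - a)
      = ∫ s in (0:ℝ)..1, (deriv f (a + s * (b-a)) - deriv f a) * (b - a) := by
    rw [← hint, ← hconst, ← intervalIntegral.integral_sub (hcont.intervalIntegrable 0 1)
      (intervalIntegrable_const)]
    congr 1; ext s; ring
  rw [hsub]
  have hbound : ∀ s ∈ Set.uIoc (0:ℝ) 1,
      ‖(deriv f (a + s * (b-a)) - deriv f a) * (b - a)‖ ≤ M * (b - a) ^ 2 * s := by
    intro s hs
    rw [Set.uIoc_of_le (by norm_num)] at hs
    have h1 : |deriv f (a + s * (b-a)) - deriv f a| ≤ M * (s * |b - a|) := by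
      have := hlip a (a + s * (b-a))
      simpa [add_sub_cancel_left, abs_mul, abs_of_pos hs.1] using this
    calc ‖(deriv f (a + s * (b-a)) - deriv f a) * (b - a)‖
        = |deriv f (a + s * (b-a)) - deriv f a| * |b - a| := abs_mul _ _
      _ ≤ (M * (s * |b - a|)) * |b - a| := by
          apply mul_le_mul_of_nonneg_right h1 (abs_nonneg _)
      _ = M * (b - a) ^ 2 * s := by rw [← sq_abs (b-a)]; ring
  have hintg : IntervalIntegrable (fun s => M * (b - a) ^ 2 * s) MeasureTheory.volume 0 1 :=
    (continuous_const.mul continuous_id).intervalIntegrable 0 1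
  have hle := intervalIntegral.norm_integral_le_of_norm_le
    zero_le_one (Filter.Eventually.of_forall fun t ht => hbound t (by rwa [Set.uIoc_of_le zero_le_one])) hintg
  have hcalc : (∫ t in (0:ℝ)..1, M * (b - a) ^ 2 * t) = M / 2 * (b - a) ^ 2 := by
    rw [intervalIntegral.integral_const_mul, integral_id]; ring
  calc |∫ s in (0:ℝ)..1, (deriv f (a + s * (b-a)) - deriv f a) * (b - a)|
      ≤ |∫ t in (0:ℝ)..1, M * (b - a) ^ 2 * t| := le_trans hle (le_abs_self _)
    _ = |M / 2 * (b - a) ^ 2| := by rw [hcalc]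
    _ = M / 2 * (b - a) ^ 2 :=
        abs_of_nonneg (mul_nonneg
          (by have := le_trans (abs_nonneg _) (hM 0); linarith) (sq_nonneg _))

/-- Lemma 5.2 (action estimate): comparison of the actions of `(p,q)`-periodic
configurations for the potentials `V_S` and `V_S + W`, given a uniform bound `D` on
the deviation between the two configurations. -/
theorem action_deviation_estimate
    (VS W : ℝ → ℝ) (hVS : ContDiff ℝ 2 VS) (hW : ContDiff ℝ 1 W)
    (MV MW : ℝ)
    (hMV : ∀ x, |deriv (deriv VS) x| ≤ MV)
    (hMW : ∀ x, |deriv W x| ≤ MW)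
    (q : ℕ) (hq : 1 ≤ q) (p : ℤ)
    (x x' : ℤ → ℝ)
    (hFK : ∀ k : ℤ, x (k + 1) - 2 * x k + x (k - 1) = deriv VS (x k))
    (hFK' : ∀ k : ℤ, x' (k + 1) - 2 * x' k + x' (k - 1)
      = deriv VS (x' k) + deriv W (x' k))
    (hper : ∀ k : ℤ, x (k + q) = x k + p)
    (hper' : ∀ k : ℤ, x' (k + q) = x' k + p)
    (h0 : x' 0 = x 0)
    (D : ℝ) (hD : 0 ≤ D)
    (hdev : ∀ k : ℤ, |x k - x' k| ≤ D) :
    |(∑ k ∈ Finset.range q,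
        ((1 / 2) * (x' ((k : ℤ) + 1) - x' (k : ℤ)) ^ 2 + VS (x' (k : ℤ)) + W (x' (k : ℤ))))
      - (∑ k ∈ Finset.range q,
          ((1 / 2) * (x ((k : ℤ) + 1) - x (k : ℤ)) ^ 2 + VS (x (k : ℤ))))
      - ∑ k ∈ Finset.range q, W (x (k : ℤ))|
      ≤ (q : ℝ) * (2 * D ^ 2 + (1 / 2) * MV * D ^ 2 + MW * D) := by
  have hMV0 : 0 ≤ MV := le_trans (abs_nonneg _) (hMV 0)
  have hMW0 : 0 ≤ MW := le_trans (abs_nonneg _) (hMW 0)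
  have hdD : ∀ k : ℤ, |x' k - x k| ≤ D := fun k => by
    rw [abs_sub_comm]; exact hdev k
  -- G is the "discrete momentum times deviation"
  set G : ℤ → ℝ := fun j => (x j - x (j - 1)) * (x' j - x j) with hG
  -- the summand in the main sums, and the "first-order part"
  set A : ℤ → ℝ := fun k =>
    (x (k + 1) - x k) * ((x' (k + 1) - x (k + 1)) - (x' k - x k))
      + deriv VS (x k) * (x' k - x k) with hA
  have hGq : G (q : ℤ) = G 0 := by
    have h1 : x (q : ℤ) = x 0 + p := by simpa using hper 0
    have h2 : x ((q : ℤ) - 1) = x (0 - 1) + p := by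
      have := hper (-1)
      rw [show (-1 + (q : ℤ)) = (q : ℤ) - 1 by ring] at this
      simpa using this
    have h3 : x' (q : ℤ) = x' 0 + p := by simpa using hper' 0
    simp only [hG, h1, h2, h3]
    ring
  have hshift : ∑ k ∈ Finset.range q, G ((k : ℤ) + 1)
      = ∑ k ∈ Finset.range q, G (k : ℤ) := by
    have e1 := Finset.sum_range_succ (fun k : ℕ => G (k : ℤ)) q
    have e2 := Finset.sum_range_succ' (fun k : ℕ => G (k : ℤ)) q
    push_cast at e1 e2
    linarith [hGq, e1, e2]
  have key : ∑ k ∈ Finset.range q, A (k : ℤ) = 0 := by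
    have hsplit : ∀ k : ℤ, A k = G (k + 1)
        + (-(x (k + 1) - x k) * (x' k - x k) + deriv VS (x k) * (x' k - x k)) := by
      intro k
      simp only [hA, hG, add_sub_cancel_right]
      ring
    calc ∑ k ∈ Finset.range q, A (k : ℤ)
        = ∑ k ∈ Finset.range q, (G ((k : ℤ) + 1)
            + (-(x ((k : ℤ) + 1) - x (k : ℤ)) * (x' (k : ℤ) - x (k : ℤ))
              + deriv VS (x (k : ℤ)) * (x' (k : ℤ) - x (k : ℤ)))) := by
          exact Finset.sum_congr rfl fun k _ => hsplit (k : ℤ)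
      _ = ∑ k ∈ Finset.range q, G ((k : ℤ) + 1)
            + ∑ k ∈ Finset.range q, (-(x ((k : ℤ) + 1) - x (k : ℤ)) * (x' (k : ℤ) - x (k : ℤ))
              + deriv VS (x (k : ℤ)) * (x' (k : ℤ) - x (k : ℤ))) := Finset.sum_add_distrib
      _ = ∑ k ∈ Finset.range q, (G (k : ℤ)
            + (-(x ((k : ℤ) + 1) - x (k : ℤ)) * (x' (k : ℤ) - x (k : ℤ))
              + deriv VS (x (k : ℤ)) * (x' (k : ℤ) - x (k : ℤ)))) := by
          rw [hshift, ← Finset.sum_add_distrib]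
      _ = 0 := by
          apply Finset.sum_eq_zero
          intro k _
          have hfk := hFK (k : ℤ)
          simp only [hG]
          rw [← hfk]
          ring
  -- combine the sums termwise
  rw [← Finset.sum_sub_distrib, ← Finset.sum_sub_distrib]
  have hins : |∑ k ∈ Finset.range q,
        ((1 / 2) * (x' ((k : ℤ) + 1) - x' (k : ℤ)) ^ 2 + VS (x' (k : ℤ)) + W (x' (k : ℤ))
          - ((1 / 2) * (x ((k : ℤ) + 1) - x (k : ℤ)) ^ 2 + VS (x (k : ℤ))) - W (x (k : ℤ)))|
      = |∑ k ∈ Finset.range q,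
        ((1 / 2) * (x' ((k : ℤ) + 1) - x' (k : ℤ)) ^ 2 + VS (x' (k : ℤ)) + W (x' (k : ℤ))
          - ((1 / 2) * (x ((k : ℤ) + 1) - x (k : ℤ)) ^ 2 + VS (x (k : ℤ))) - W (x (k : ℤ))
          - A (k : ℤ))| := by
    conv_rhs => rw [Finset.sum_sub_distrib]
    rw [key, sub_zero]
  rw [hins]
  have hterm : ∀ k : ℤ,
      |(1 / 2) * (x' (k + 1) - x' k) ^ 2 + VS (x' k) + W (x' k)
        - ((1 / 2) * (x (k + 1) - x k) ^ 2 + VS (x k)) - W (x k) - A k|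
      ≤ 2 * D ^ 2 + (1 / 2) * MV * D ^ 2 + MW * D := by
    intro k
    have hWd : Differentiable ℝ W := hW.differentiable (by norm_num)
    have hRW : |W (x' k) - W (x k)| ≤ MW * D := by
      calc |W (x' k) - W (x k)| ≤ MW * |x' k - x k| :=
            lip_of_deriv_bound W hWd MW hMW (x k) (x' k)
        _ ≤ MW * D := mul_le_mul_of_nonneg_left (hdD k) hMW0
    have hRV : |VS (x' k) - VS (x k) - deriv VS (x k) * (x' k - x k)|
        ≤ MV / 2 * D ^ 2 := by
      calc |VS (x' k) - VS (x k) - deriv VS (x k) * (x' k - x k)|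
          ≤ MV / 2 * (x' k - x k) ^ 2 := taylor_bound VS hVS MV hMV (x k) (x' k)
        _ ≤ MV / 2 * D ^ 2 := by
            apply mul_le_mul_of_nonneg_left _ (by linarith)
            rw [← sq_abs]
            exact pow_le_pow_left₀ (abs_nonneg _) (hdD k) 2
    have hkin : ((x' (k + 1) - x (k + 1)) - (x' k - x k)) ^ 2 ≤ 4 * D ^ 2 := by
      have habs : |(x' (k + 1) - x (k + 1)) - (x' k - x k)| ≤ 2 * D :=
        le_trans (abs_sub _ _) (by linarith [hdD (k + 1), hdD k])
      have := pow_le_pow_left₀ (abs_nonneg _) habs 2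
      rw [sq_abs] at this
      nlinarith [this]
    have heq : (1 / 2) * (x' (k + 1) - x' k) ^ 2 + VS (x' k) + W (x' k)
        - ((1 / 2) * (x (k + 1) - x k) ^ 2 + VS (x k)) - W (x k) - A k
        = (1 / 2) * ((x' (k + 1) - x (k + 1)) - (x' k - x k)) ^ 2
          + (VS (x' k) - VS (x k) - deriv VS (x k) * (x' k - x k))
          + (W (x' k) - W (x k)) := by
      simp only [hA]; ring
    rw [heq]
    calc |(1 / 2) * ((x' (k + 1) - x (k + 1)) - (x' k - x k)) ^ 2
          + (VS (x' k) - VS (x k) - deriv VS (x k) * (x' k - x k))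
          + (W (x' k) - W (x k))|
        ≤ |(1 / 2) * ((x' (k + 1) - x (k + 1)) - (x' k - x k)) ^ 2
            + (VS (x' k) - VS (x k) - deriv VS (x k) * (x' k - x k))|
          + |W (x' k) - W (x k)| := abs_add_le _ _
      _ ≤ (|(1 / 2) * ((x' (k + 1) - x (k + 1)) - (x' k - x k)) ^ 2|
            + |VS (x' k) - VS (x k) - deriv VS (x k) * (x' k - x k)|)
          + |W (x' k) - W (x k)| := by gcongr; exact abs_add_le _ _
      _ ≤ 2 * D ^ 2 + (1 / 2) * MV * D ^ 2 + MW * D := by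
          have h1 : |(1 / 2) * ((x' (k + 1) - x (k + 1)) - (x' k - x k)) ^ 2|
              = (1 / 2) * ((x' (k + 1) - x (k + 1)) - (x' k - x k)) ^ 2 :=
            abs_of_nonneg (by positivity)
          rw [h1]
          linarith [hRV, hRW, hkin]
  calc |∑ k ∈ Finset.range q,
        ((1 / 2) * (x' ((k : ℤ) + 1) - x' (k : ℤ)) ^ 2 + VS (x' (k : ℤ)) + W (x' (k : ℤ))
          - ((1 / 2) * (x ((k : ℤ) + 1) - x (k : ℤ)) ^ 2 + VS (x (k : ℤ))) - W (x (k : ℤ))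
          - A (k : ℤ))|
      ≤ ∑ k ∈ Finset.range q,
        |(1 / 2) * (x' ((k : ℤ) + 1) - x' (k : ℤ)) ^ 2 + VS (x' (k : ℤ)) + W (x' (k : ℤ))
          - ((1 / 2) * (x ((k : ℤ) + 1) - x (k : ℤ)) ^ 2 + VS (x (k : ℤ))) - W (x (k : ℤ))
          - A (k : ℤ)| := Finset.abs_sum_le_sum_abs _ _
    _ ≤ ∑ _k ∈ Finset.range q, (2 * D ^ 2 + (1 / 2) * MV * D ^ 2 + MW * D) :=
        Finset.sum_le_sum fun k _ => hterm (k : ℤ)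
    _ = (q : ℝ) * (2 * D ^ 2 + (1 / 2) * MV * D ^ 2 + MW * D) := by
        rw [Finset.sum_const, Finset.card_range, nsmul_eq_mul]
end

section
/- Let k ≥ 1 be an integer, r ∈ ℤ, and let S : ℝ → ℝ be a monotone nondecreasing map such that S(x + r/k) = S(x) + r/k for all x ∈ ℝ and the k-th iterate satisfies S^{∘k}(x) = x + r for all x ∈ ℝ. Then S(x) = x + r/k for all x ∈ ℝ. -/
/-- Lemma used in Section 8 (cf. Lemma 2.1 of [arXiv:2008.03566]): a monotone map of
the reals commuting with the translation by `r/k` whose `k`-th iterate is the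
translation by `r` must be the translation by `r/k`. -/
theorem monotone_kth_root_of_translation_is_translation
    (k : ℕ) (hk : 1 ≤ k) (r : ℤ) (S : ℝ → ℝ)
    (hmono : Monotone S)
    (hcom : ∀ x : ℝ, S (x + (r : ℝ) / (k : ℝ)) = S x + (r : ℝ) / (k : ℝ))
    (hiter : ∀ x : ℝ, S^[k] x = x + (r : ℝ)) :
    ∀ x : ℝ, S x = x + (r : ℝ) / (k : ℝ) := by
  set c : ℝ := (r : ℝ) / (k : ℝ) with hc
  have hk0 : (0 : ℝ) < (k : ℝ) := by exact_mod_cast hk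
  have hkc : (k : ℝ) * c = (r : ℝ) := by rw [hc]; field_simp [hk0.ne']
  -- shift lemma
  have shift : ∀ m : ℕ, ∀ y : ℝ, S (y + m * c) = S y + m * c := by
    intro m
    induction m with
    | zero => intro y; simp
    | succ m ih =>
      intro y
      have : y + (m + 1 : ℕ) * c = (y + m * c) + c := by push_cast; ring
      rw [this, hcom, ih]
      push_cast; ring
  intro x
  by_contra h
  rcases lt_or_gt_of_ne h with hlt | hgt
  · have step : ∀ n : ℕ, S^[n + 1] x < x + (n + 1 : ℕ) * c := by
      intro n
      induction n with
      | zero => simpa using hlt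
      | succ n ih =>
        have h1 : S^[n + 1 + 1] x = S (S^[n + 1] x) :=
          Function.iterate_succ_apply' S (n + 1) x
        have h2 : S (S^[n + 1] x) ≤ S (x + (n + 1 : ℕ) * c) := hmono ih.le
        have h3 : S (x + (n + 1 : ℕ) * c) = S x + (n + 1 : ℕ) * c := shift _ _
        have : S^[n + 2] x ≤ S x + (n + 1 : ℕ) * c := by rw [h1]; rw [h3] at h2; exact h2
        push_cast at this ⊢
        nlinarith [hlt]
    obtain ⟨m, hm⟩ : ∃ m, k = m + 1 := ⟨k - 1, (Nat.succ_pred_eq_of_pos hk).symm⟩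
    have := step m
    rw [← hm, hiter x] at this
    rw [hkc] at this
    exact lt_irrefl _ this
  · have step : ∀ n : ℕ, x + (n + 1 : ℕ) * c < S^[n + 1] x := by
      intro n
      induction n with
      | zero => simpa using hgt
      | succ n ih =>
        have h1 : S^[n + 1 + 1] x = S (S^[n + 1] x) :=
          Function.iterate_succ_apply' S (n + 1) x
        have h2 : S (x + (n + 1 : ℕ) * c) ≤ S (S^[n + 1] x) := hmono ih.le
        have h3 : S (x + (n + 1 : ℕ) * c) = S x + (n + 1 : ℕ) * c := shift _ _
        have : S x + (n + 1 : ℕ) * c ≤ S^[n + 2] x := by rw [h1]; rw [h3] at h2; exact h2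
        push_cast at this ⊢
        nlinarith [hgt]
    obtain ⟨m, hm⟩ : ∃ m, k = m + 1 := ⟨k - 1, (Nat.succ_pred_eq_of_pos hk).symm⟩
    have := step m
    rw [← hm, hiter x] at this
    rw [hkc] at this
    exact lt_irrefl _ this
end
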